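/- arXiv:1809.08431 — 7 statements merged into one kernel-verified Lean document; each statement's English description precedes it below -/
import Mathlib

section
/- For every integer n ≥ 1, the Genocchi number G_{2n} is an integer (i.e., the rational number 2(1-2^{2n})B_{2n} is an integer). -/
open PowerSeries Finset Nat


noncomputable def gg (k : ℕ) : ℚ := 2 * (1 - 2 ^ k) * bernoulli k
noncomputable def GG : PowerSeries ℚ := PowerSeries.mk fun n => gg n / n.factorial


theorem C2_eq : (C (R := ℚ)) 2 = (2 : PowerSeries ℚ) := by
  have := map_ofNat (C (R := ℚ)) 2
  exact this

theorem GG_eq : GG = 2 * bernoulliPowerSeries ℚ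
    - 2 * rescale 2 (bernoulliPowerSeries ℚ) := by
  ext n
  rw [← C2_eq]
  simp [GG, gg, bernoulliPowerSeries, coeff_rescale]
  field_simp

theorem rescale_X' (a : ℚ) : rescale a (X : PowerSeries ℚ) = C (R := ℚ) a * X := by
  ext n
  simp [coeff_rescale, coeff_X]

theorem GG_mul_exp_add_one : GG * (exp ℚ + 1) = 2 * X := by
  have hB := bernoulliPowerSeries_mul_exp_sub_one ℚ
  have hr : rescale 2 (bernoulliPowerSeries ℚ) * (exp ℚ ^ 2 - 1) = 2 * X := by
    have := congrArg (rescale (2:ℚ)) hB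
    rw [map_mul, map_sub, map_one, rescale_X', C2_eq] at this
    rw [exp_pow_eq_rescale_exp]
    norm_num at this ⊢
    exact this
  have hne : exp ℚ - 1 ≠ 0 := by
    intro h
    have := congrArg (coeff (R := ℚ) 1) h
    simp [coeff_exp] at this
  apply mul_right_cancel₀ hne
  have expand : GG * (exp ℚ + 1) * (exp ℚ - 1)
      = 2 * (bernoulliPowerSeries ℚ * (exp ℚ - 1)) * (exp ℚ + 1)
        - 2 * (rescale 2 (bernoulliPowerSeries ℚ) * (exp ℚ ^ 2 - 1)) := by
    rw [GG_eq]; ring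
  rw [expand, hB, hr]
  ring


theorem deriv_exp' : d⁄dX ℚ (exp ℚ) = exp ℚ := by
  ext n
  rw [coeff_derivative]
  simp [coeff_exp, Nat.factorial_succ]
  field_simp

theorem GG_sq : GG ^ 2 = 2 * X * (d⁄dX ℚ GG) + 2 * X * GG - 2 * GG := by
  have h : GG * (exp ℚ + 1) = 2 * X := GG_mul_exp_add_one
  have hd := congrArg (d⁄dX ℚ) h
  rw [Derivation.leibniz, Derivation.leibniz, map_add, deriv_exp', Derivation.map_one_eq_zero,
    derivative_X] at hd
  have h2 : (d⁄dX ℚ) (2 : ℚ⟦X⟧) = 0 := by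
    rw [show (2:ℚ⟦X⟧) = C (R := ℚ) 2 from by simpa using (map_ofNat (C (R := ℚ)) 2).symm, derivative_C]
  rw [h2] at hd
  simp only [smul_eq_mul, add_zero, smul_zero, mul_one] at hd
  have hd2 := congrArg (fun p => GG * p) hd
  simp only [mul_add] at hd2
  have hGsqE : GG ^ 2 * exp ℚ = 2 * X * GG - GG ^ 2 := by
    have hh : GG ^ 2 * (exp ℚ + 1) = (2 * X) * GG := by linear_combination GG * h
    linear_combination hh
  linear_combination (-1 : ℚ⟦X⟧) * hd2 + hGsqE + (d⁄dX ℚ GG) * h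


theorem hfact : ∀ m : ℕ, (m.factorial : ℚ) ≠ 0 := fun m => Nat.cast_ne_zero.2 m.factorial_ne_zero

theorem coeff_GG_mul_fact (k : ℕ) : coeff (R := ℚ) k GG * k.factorial = gg k := by
  simp [GG, div_mul_cancel₀ _ (hfact k)]

theorem coeff_mul_fact (F H : ℚ⟦X⟧) (n : ℕ) :
    coeff (R := ℚ) n (F * H) * n.factorial
      = ∑ k ∈ range (n+1), (n.choose k : ℚ) * (coeff (R := ℚ) k F * k.factorial)
          * (coeff (R := ℚ) (n-k) H * (n-k).factorial) := by
  rw [coeff_mul, Finset.Nat.sum_antidiagonal_eq_sum_range_succ_mk, sum_mul]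
  refine sum_congr rfl fun k hk => ?_
  have hkn : k ≤ n := by simpa using mem_range_succ_iff.mp hk
  have h := Nat.choose_mul_factorial_mul_factorial hkn
  have h' : ((n.choose k : ℚ)) * k.factorial * (n-k).factorial = n.factorial := by
    exact_mod_cast congrArg (Nat.cast : ℕ → ℚ) h
  calc coeff (R := ℚ) k F * coeff (R := ℚ) (n - k) H * ↑n.factorial
      = coeff (R := ℚ) k F * coeff (R := ℚ) (n - k) H * ((n.choose k : ℚ) * k.factorial * (n-k).factorial) := by
        rw [h']
    _ = _ := by ring

theorem coeff_exp_add_one_mul_fact (j : ℕ) :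
    coeff (R := ℚ) j (exp ℚ + 1) * j.factorial = 1 + if j = 0 then 1 else 0 := by
  rcases eq_or_ne j 0 with h | h
  · simp [h, coeff_exp]
  · simp [h, coeff_exp, coeff_one, inv_mul_cancel₀ (hfact j)]

theorem lin_rec (n : ℕ) (hn : 2 ≤ n) :
    (∑ k ∈ range (n+1), (n.choose k : ℚ) * gg k) + gg n = 0 := by
  have h := congrArg (fun F => coeff (R := ℚ) n F * n.factorial) GG_mul_exp_add_one
  rw [coeff_mul_fact] at h
  have hR : coeff (R := ℚ) n (2 * X) * (n.factorial : ℚ) = 0 := by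
    have : coeff (R := ℚ) n (2 * X : ℚ⟦X⟧) = 0 := by
      rw [show ((2 * X : ℚ⟦X⟧)) = C (R := ℚ) 2 * X from by norm_num [show (C (R := ℚ)) 2 = (2:ℚ⟦X⟧) from by simpa using (map_ofNat (C (R := ℚ)) 2)], coeff_C_mul, coeff_X]
      rcases eq_or_ne n 1 with h1 | h1
      · omega
      · simp [h1]
    rw [this, zero_mul]
  rw [hR] at h
  have : ∀ k ∈ range (n+1), (n.choose k : ℚ) * (coeff (R := ℚ) k GG * k.factorial)
      * (coeff (R := ℚ) (n-k) (exp ℚ + 1) * (n-k).factorial)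
      = (n.choose k : ℚ) * gg k * (1 + if n - k = 0 then 1 else 0) := by
    intro k _
    rw [coeff_GG_mul_fact, coeff_exp_add_one_mul_fact]
  rw [sum_congr rfl this] at h
  -- split the if: only k = n has n - k = 0
  have hsplit : ∑ k ∈ range (n+1), (n.choose k : ℚ) * gg k * (1 + if n - k = 0 then 1 else 0)
      = (∑ k ∈ range (n+1), (n.choose k : ℚ) * gg k) + gg n := by
    rw [show (∑ k ∈ range (n+1), (n.choose k : ℚ) * gg k * (1 + if n - k = 0 then 1 else 0))
      = ∑ k ∈ range (n+1), ((n.choose k : ℚ) * gg k + if n - k = 0 then (n.choose k : ℚ) * gg k else 0) from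
        sum_congr rfl (by intro k _; split <;> ring), sum_add_distrib]
    congr 1
    rw [show (∑ x ∈ range (n+1), if n - x = 0 then (n.choose x : ℚ) * gg x else 0)
        = ∑ x ∈ range (n+1), if x = n then (n.choose x : ℚ) * gg x else 0 from
      sum_congr rfl (by intro x hx; rw [mem_range] at hx; congr 1; simp; omega),
      Finset.sum_ite_eq' (range (n+1)) n]
    simp
  rw [hsplit] at h
  exact h

theorem two_mul_coeff (n : ℕ) (F : ℚ⟦X⟧) : coeff (R := ℚ) n (2 * F) = 2 * coeff (R := ℚ) n F := by
  rw [show ((2 : ℚ⟦X⟧)) = C (R := ℚ) 2 from by simpa using (map_ofNat (C (R := ℚ)) 2).symm, coeff_C_mul]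

theorem quad_rec (n : ℕ) :
    ∑ k ∈ range (n+2), ((n+1).choose k : ℚ) * gg k * gg (n+1-k)
      = 2*(n+1)*gg (n+1) + 2*(n+1)*gg n - 2*gg (n+1) := by
  have h := congrArg (fun F => coeff (R := ℚ) (n+1) F * (n+1).factorial) GG_sq
  rw [pow_two, coeff_mul_fact] at h
  have hL : ∑ k ∈ range (n+1+1), ((n+1).choose k : ℚ) * (coeff (R := ℚ) k GG * k.factorial)
      * (coeff (R := ℚ) (n+1-k) GG * (n+1-k).factorial)
      = ∑ k ∈ range (n+2), ((n+1).choose k : ℚ) * gg k * gg (n+1-k) := by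
    refine sum_congr rfl fun k _ => ?_
    rw [coeff_GG_mul_fact, coeff_GG_mul_fact]
  rw [hL] at h
  have hR : coeff (R := ℚ) (n+1) (2 * X * (d⁄dX ℚ GG) + 2 * X * GG - 2 * GG) * ((n+1).factorial : ℚ)
      = 2*(n+1)*gg (n+1) + 2*(n+1)*gg n - 2*gg (n+1) := by
    rw [map_sub, map_add]
    rw [mul_assoc, two_mul_coeff, coeff_succ_X_mul, mul_assoc, two_mul_coeff, coeff_succ_X_mul,
      two_mul_coeff, coeff_derivative]
    have e1 : coeff (R := ℚ) (n+1) GG = gg (n+1) / (n+1).factorial := by simp [GG]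
    have e2 : coeff (R := ℚ) n GG = gg n / n.factorial := by simp [GG]
    rw [e1, e2]
    have : ((n+1).factorial : ℚ) = (n+1) * n.factorial := by
      exact_mod_cast congrArg (Nat.cast : ℕ → ℚ) (Nat.factorial_succ n)
    rw [this]
    field_simp
  rw [hR] at h
  exact h

-- parity split helper
theorem sum_range_even_odd {M : Type*} [AddCommMonoid M] (f : ℕ → M) (n : ℕ) :
    ∑ k ∈ range (2*n), f k = ∑ j ∈ range n, (f (2*j) + f (2*j+1)) := by
  induction n with
  | zero => simp
  | succ m ih =>
      rw [sum_range_succ, ← ih, mul_add, mul_one,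
        show 2*m+2 = (2*m+1)+1 from rfl, sum_range_succ, sum_range_succ]
      ring_nf
      rw [add_assoc]

-- even binomial sum
theorem even_choose_sum (n : ℕ) (hn : 1 ≤ n) :
    ∑ j ∈ range (n+1), ((2*n).choose (2*j) : ℤ) = 2^(2*n-1) := by
  have h1 : ∑ k ∈ range (2*n+1), ((2*n).choose k : ℤ) = 2^(2*n) := by
    exact_mod_cast congrArg (Nat.cast : ℕ → ℤ) (Nat.sum_range_choose (2*n))
  have h2 : ∑ k ∈ range (2*n+1), (-1:ℤ)^k * ((2*n).choose k) = 0 := by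
    rw [Int.alternating_sum_range_choose]
    simp [Nat.mul_ne_zero, hn]
    omega
  have h3 : ∑ k ∈ range (2*n+2), ((1 + (-1:ℤ)^k) * ((2*n).choose k)) = 2^(2*n) := by
    rw [sum_range_succ]
    have : ((2*n).choose (2*n+1) : ℤ) = 0 := by
      exact_mod_cast congrArg (Nat.cast : ℕ → ℤ) (Nat.choose_eq_zero_of_lt (by omega))
    rw [this]
    simp only [mul_zero, add_zero]
    calc ∑ k ∈ range (2*n+1), ((1 + (-1:ℤ)^k) * ((2*n).choose k))
        = ∑ k ∈ range (2*n+1), (((2*n).choose k : ℤ) + (-1:ℤ)^k * ((2*n).choose k)) := by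
          refine sum_congr rfl fun k _ => by ring
      _ = 2^(2*n) := by rw [sum_add_distrib, h1, h2, add_zero]
  have h4 : ∑ k ∈ range (2*(n+1)), ((1 + (-1:ℤ)^k) * ((2*n).choose k))
      = ∑ j ∈ range (n+1), (2 * ((2*n).choose (2*j) : ℤ)) := by
    rw [sum_range_even_odd]
    refine sum_congr rfl fun j _ => ?_
    have e1 : (-1:ℤ)^(2*j) = 1 := by rw [pow_mul]; norm_num
    have e2 : (-1:ℤ)^(2*j+1) = -1 := by rw [pow_succ, e1]; norm_num
    rw [e1, e2]; ring
  have hp : (2:ℤ)^(2*n) = 2 * 2^(2*n-1) := by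
    have e : 2*n - 1 + 1 = 2*n := by omega
    conv_lhs => rw [← e]
    rw [pow_succ]
    ring
  have h5 : 2 * ∑ j ∈ range (n+1), ((2*n).choose (2*j) : ℤ) = 2 * 2^(2*n-1) := by
    rw [mul_sum, ← h4, show 2*(n+1) = 2*n+2 from rfl, h3, hp]
  exact mul_left_cancel₀ (by norm_num) h5

theorem gg_zero : gg 0 = 0 := by simp [gg]
theorem gg_one : gg 1 = 1 := by norm_num [gg, bernoulli_one]
theorem gg_two : gg 2 = -1 := by
  rw [gg, bernoulli_eq_bernoulli'_of_ne_one (by norm_num), bernoulli'_two]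
  norm_num
theorem gg_odd (k : ℕ) (h1 : Odd k) (h2 : 3 ≤ k) : gg k = 0 := by
  rw [gg, bernoulli_eq_bernoulli'_of_ne_one (by omega),
    bernoulli'_eq_zero_of_odd h1 (by omega), mul_zero]

noncomputable def U (j : ℕ) : ℤ := (gg (2*j)).num

theorem key : ∀ n : ℕ, 1 ≤ n → (U n : ℚ) = gg (2*n) ∧ U n % 2 = 1 := by
  intro n
  induction n using Nat.strong_induction_on with
  | _ n IH =>
  intro hn
  rcases eq_or_lt_of_le hn with h1 | h1
  · -- base case n = 1
    subst h1
    have hg : gg (2*1) = ((-1 : ℤ) : ℚ) := by norm_num [gg_two]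
    have hU : U 1 = -1 := by rw [U, hg, Rat.num_intCast]
    exact ⟨by rw [hU, hg], by rw [hU]; decide⟩
  · -- inductive step, n ≥ 2
    have hn2 : 2 ≤ n := h1
    -- the integer t with (t : ℚ) = ∑_{k < 2n} C(2n,k) gg k
    set t : ℤ := 2*n + ∑ j ∈ Ico 1 n, ((2*n).choose (2*j) : ℤ) * U j with ht
    have cast_t : (t : ℚ) = ∑ k ∈ range (2*n), ((2*n).choose k : ℚ) * gg k := by
      rw [sum_range_even_odd (fun k => ((2*n).choose k : ℚ) * gg k)]
      have hodd : ∀ j ∈ range n, ((2*n).choose (2*j+1) : ℚ) * gg (2*j+1)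
          = if j = 0 then (2*n : ℚ) else 0 := by
        intro j _
        rcases eq_or_ne j 0 with h | h
        · simp [h, gg_one]
        · rw [if_neg h, gg_odd (2*j+1) (by exact ⟨j, by ring⟩) (by omega), mul_zero]
      have heven : ∀ j ∈ range n, ((2*n).choose (2*j) : ℚ) * gg (2*j)
          = if j = 0 then 0 else ((2*n).choose (2*j) : ℚ) * (U j : ℚ) := by
        intro j hj
        rcases eq_or_ne j 0 with h | h
        · simp [h, gg_zero]
        · rw [if_neg h, (IH j (mem_range.mp hj) (by omega)).1]
      rw [sum_congr rfl fun j hj => by rw [hodd j hj, heven j hj]]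
      rw [sum_add_distrib, Finset.sum_ite_eq' (range n) 0 (fun _ => (2*n : ℚ)),
        if_pos (mem_range.mpr (by omega))]
      have : ∑ j ∈ range n, (if j = 0 then 0 else ((2*n).choose (2*j) : ℚ) * (U j : ℚ))
          = ∑ j ∈ Ico 1 n, ((2*n).choose (2*j) : ℚ) * (U j : ℚ) := by
        rw [range_eq_Ico, Finset.sum_eq_sum_Ico_succ_bot (by omega : 0 < n), if_pos rfl,
          zero_add]
        exact sum_congr rfl fun j hj => if_neg (by rw [mem_Ico] at hj; omega)
      rw [this, ht]
      push_cast
      ring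
    -- linear recurrence: (t:ℚ) + 2 * gg (2n) = 0
    have htg : (t : ℚ) + 2 * gg (2*n) = 0 := by
      have hl := lin_rec (2*n) (by omega)
      rw [sum_range_succ, Nat.choose_self] at hl
      rw [cast_t]
      push_cast at hl ⊢
      linarith
    -- the quadratic sum as an integer
    set s : ℤ := ∑ j ∈ Ico 1 n, ((2*n).choose (2*j) : ℤ) * U j * U (n-j) with hs
    have cast_s : (s : ℚ) = ∑ k ∈ range (2*n+2), ((2*n).choose k : ℚ) * gg k * gg (2*n-k) := by
      rw [show 2*n+2 = 2*(n+1) from by ring,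
        sum_range_even_odd (fun k => ((2*n).choose k : ℚ) * gg k * gg (2*n-k))]
      have hterm : ∀ j ∈ range (n+1),
          (((2*n).choose (2*j) : ℚ) * gg (2*j) * gg (2*n-2*j)
            + ((2*n).choose (2*j+1) : ℚ) * gg (2*j+1) * gg (2*n-(2*j+1)))
          = if j = 0 ∨ j = n then 0 else ((2*n).choose (2*j) : ℚ) * (U j : ℚ) * (U (n-j) : ℚ) := by
        intro j hj
        rw [mem_range] at hj
        have hodd0 : ((2*n).choose (2*j+1) : ℚ) * gg (2*j+1) * gg (2*n-(2*j+1)) = 0 := by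
          rcases eq_or_ne j 0 with h | h
          · rw [h]
            rw [gg_odd (2*n - (2*0+1)) ⟨n-1, by omega⟩ (by omega), mul_zero]
          · rw [gg_odd (2*j+1) ⟨j, by ring⟩ (by omega)]
            ring
        rw [hodd0, add_zero]
        rcases eq_or_ne j 0 with h | h
        · simp [h, gg_zero]
        rcases eq_or_ne j n with h' | h'
        · rw [if_pos (Or.inr h'), h']
          rw [show 2*n - 2*n = 0 from by omega, gg_zero]
          ring
        · rw [if_neg (by tauto), (IH j (by omega) (by omega)).1,
            show 2*n - 2*j = 2*(n-j) from by omega, (IH (n-j) (by omega) (by omega)).1]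
      rw [sum_congr rfl hterm]
      rw [sum_ite, sum_const_zero, zero_add]
      rw [show filter (fun j => ¬(j = 0 ∨ j = n)) (range (n+1)) = Ico 1 n from by
        ext j
        simp [mem_Ico, mem_range]
        omega]
      rw [hs]
      push_cast
      rfl
    -- quadratic recurrence gives s = -(2n-1) * t
    have hst : s = -((2*(n:ℤ)-1) * t) := by
      have hq := quad_rec (2*n-1)
      rw [show 2*n-1+1 = 2*n from by omega, show 2*n-1+2 = 2*n+1 from by omega] at hq
      rw [gg_odd (2*n-1) ⟨n-1, by omega⟩ (by omega)] at hq
      have hext : ∑ k ∈ range (2*n+2), ((2*n).choose k : ℚ) * gg k * gg (2*n-k)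
          = ∑ k ∈ range (2*n+1), ((2*n).choose k : ℚ) * gg k * gg (2*n-k) := by
        rw [sum_range_succ, Nat.choose_eq_zero_of_lt (by omega)]
        norm_num
      have : (s : ℚ) = -((2*(n:ℚ)-1) * t) := by
        have h2 : gg (2*n) = -(t:ℚ)/2 := by linarith
        rw [cast_s, hext, hq, h2, Nat.cast_sub (by omega : 1 ≤ 2*n)]
        push_cast
        ring
      exact_mod_cast this
    -- the binomial coefficient sum
    set c : ℤ := ∑ j ∈ Ico 1 n, ((2*n).choose (2*j) : ℤ) with hcdef
    have hc : c = 2^(2*n-1) - 2 := by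
      have he := even_choose_sum n (by omega)
      rw [sum_range_succ, Nat.choose_self, range_eq_Ico,
        Finset.sum_eq_sum_Ico_succ_bot (by omega : 0 < n)] at he
      norm_num at he
      linarith
    -- oddness facts for U j, 1 ≤ j ≤ n-1
    have hUodd : ∀ j ∈ Ico 1 n, (2:ℤ) ∣ (U j - 1) := by
      intro j hj
      rw [mem_Ico] at hj
      have := (IH j (by omega) (by omega)).2
      omega
    -- s ≡ c mod 4
    have hmod : (4:ℤ) ∣ s - c := by
      have hdecomp : s - c = (∑ j ∈ Ico 1 n, ((2*n).choose (2*j) : ℤ) * ((U j - 1) * (U (n-j) - 1)))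
          + (∑ j ∈ Ico 1 n, ((2*n).choose (2*j) : ℤ) * (U j - 1))
          + (∑ j ∈ Ico 1 n, ((2*n).choose (2*j) : ℤ) * (U (n-j) - 1)) := by
        rw [hs, hcdef, ← sum_sub_distrib, ← sum_add_distrib, ← sum_add_distrib]
        exact sum_congr rfl fun j _ => by ring
      have d1 : (4:ℤ) ∣ ∑ j ∈ Ico 1 n, ((2*n).choose (2*j) : ℤ) * ((U j - 1) * (U (n-j) - 1)) := by
        refine Finset.dvd_sum fun j hj => ?_
        have hj' := hj
        rw [mem_Ico] at hj'
        have h4 : (4:ℤ) ∣ (U j - 1) * (U (n-j) - 1) := by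
          have := mul_dvd_mul (hUodd j hj) (hUodd (n-j) (by rw [mem_Ico]; omega))
          norm_num at this
          exact this
        exact Dvd.dvd.mul_left h4 _
      have hreflect : (∑ j ∈ Ico 1 n, ((2*n).choose (2*j) : ℤ) * (U (n-j) - 1))
          = ∑ j ∈ Ico 1 n, ((2*n).choose (2*j) : ℤ) * (U j - 1) := by
        have hsymm : ∀ j ∈ Ico 1 n, ((2*n).choose (2*j) : ℤ) * (U (n-j) - 1)
            = (fun i => ((2*n).choose (2*i) : ℤ) * (U i - 1)) (n - j) := by
          intro j hj
          rw [mem_Ico] at hj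
          have : (2*n).choose (2*(n-j)) = (2*n).choose (2*j) := by
            rw [show 2*(n-j) = 2*n - 2*j from by omega, Nat.choose_symm (by omega)]
          simp only [this]
        rw [sum_congr rfl hsymm]
        -- reindex: sum over Ico 1 n of F (n - j) = sum of F j
        rw [Finset.sum_Ico_eq_sum_range, Finset.sum_Ico_eq_sum_range]
        rw [← Finset.sum_range_reflect]
        refine sum_congr rfl fun i hi => ?_
        rw [mem_range] at hi
        congr 1
        omega
      have d23 : (4:ℤ) ∣ (∑ j ∈ Ico 1 n, ((2*n).choose (2*j) : ℤ) * (U j - 1))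
          + (∑ j ∈ Ico 1 n, ((2*n).choose (2*j) : ℤ) * (U (n-j) - 1)) := by
        rw [hreflect, ← two_mul]
        have : (2:ℤ) ∣ ∑ j ∈ Ico 1 n, ((2*n).choose (2*j) : ℤ) * (U j - 1) :=
          Finset.dvd_sum fun j hj => Dvd.dvd.mul_left (hUodd j hj) _
        obtain ⟨w, hw⟩ := this
        exact ⟨w, by rw [hw]; ring⟩
      rw [hdecomp, add_assoc]
      exact dvd_add d1 d23
    -- s % 4 = 2
    have hpow4 : (4:ℤ) ∣ 2^(2*n-1) := by
      have : 2*n-1 = (2*n-3) + 2 := by omega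
      rw [this, pow_add]
      exact ⟨2^(2*n-3), by ring⟩
    have hs4 : s % 4 = 2 := by
      obtain ⟨a, ha⟩ := hmod
      obtain ⟨b, hb⟩ := hpow4
      omega
    -- t = 2 * w with w odd
    have hteven : (2:ℤ) ∣ t := by
      rcases Int.even_or_odd t with he | ho
      · exact he.two_dvd
      · exfalso
        have hodd1 : Odd (2*(n:ℤ)-1) := by
          rw [Int.odd_iff]
          omega
        have hsodd : Odd s := by
          rw [hst]
          exact (hodd1.mul ho).neg
        rw [Int.odd_iff] at hsodd
        omega
    obtain ⟨w, hw⟩ := hteven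
    have hwodd : w % 2 = 1 := by
      rcases Int.even_or_odd w with he | ho
      · exfalso
        obtain ⟨v, hv⟩ := he
        have hq : s = 4 * (-((2*(n:ℤ)-1) * v)) := by
          rw [hst, hw, hv]
          ring
        omega
      · obtain ⟨v, hv⟩ := ho
        omega
    -- conclude
    have hggval : gg (2*n) = ((-w : ℤ) : ℚ) := by
      have : (t:ℚ) = 2 * (w:ℚ) := by exact_mod_cast congrArg (Int.cast : ℤ → ℚ) hw
      push_cast
      linarith
    have hUn : U n = -w := by rw [U, hggval, Rat.num_intCast]
    exact ⟨by rw [hUn, ← hggval], by omega⟩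

/-- For every `n ≥ 1`, the Genocchi number `G_{2n} = 2(1-2^{2n})B_{2n}`
is an integer. -/
theorem genocchi_even_is_integer :
    ∀ n : ℕ, 1 ≤ n → ∃ m : ℤ, (m : ℚ) = 2 * (1 - 2 ^ (2 * n)) * bernoulli (2 * n) := by
  intro n hn
  exact ⟨U n, (key n hn).1⟩
end

section
/- For every integer n ≥ 1, (-1)^n G_{2n} is an odd positive integer. -/
open Finset

-- helper: j < 2^(j-1) for j ≥ 3, stated shifted
lemma aux_two_pow (k : ℕ) : k + 3 < 2 ^ (k + 2) := by
  induction k with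
  | zero => norm_num
  | succ n ih => rw [pow_succ]; omega

lemma padicValNat_lt (p : ℕ) (hp : 2 ≤ p) {j : ℕ} (hj : 1 ≤ j) : padicValNat p j < j := by
  by_contra h
  push_neg at h
  have h1 : p ^ j ∣ j := (pow_dvd_pow p h).trans pow_padicValNat_dvd
  have h2 : p ^ j ≤ j := Nat.le_of_dvd hj h1
  have h3 : j < 2 ^ j := Nat.lt_two_pow_self
  have h4 : 2 ^ j ≤ p ^ j := Nat.pow_le_pow_left hp j
  omega

lemma padicValNat_add_two_le (p : ℕ) (hp : 2 ≤ p) {j : ℕ} (hj : 2 ≤ j)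
    (hex : p = 2 → j ≠ 2) : padicValNat p j + 2 ≤ j := by
  rcases eq_or_lt_of_le hj with h2 | h3
  · -- j = 2
    have hpodd : p ≠ 2 := by intro h; exact (hex h) h2.symm
    have : ¬ p ∣ j := by
      rw [← h2]; intro h; have := Nat.le_of_dvd (by norm_num) h; interval_cases p <;> omega
    rw [padicValNat.eq_zero_of_not_dvd this]; omega
  · -- j ≥ 3
    by_contra h
    push_neg at h
    have h1 : p ^ (j - 1) ∣ j := (pow_dvd_pow p (by omega)).trans pow_padicValNat_dvd
    have h2 : p ^ (j - 1) ≤ j := Nat.le_of_dvd (by omega) h1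
    have h4 : 2 ^ (j - 1) ≤ p ^ (j - 1) := Nat.pow_le_pow_left hp _
    have h5 := aux_two_pow (j - 3)
    have : j - 3 + 2 = j - 1 := by omega
    rw [this] at h5
    omega

lemma choose_cast_div (m i : ℕ) (hi : i < m) :
    (((m + 1).choose i : ℚ)) / (m + 1) = (m.choose i : ℚ) / (m + 1 - i : ℕ) := by
  have key : (m + 1).choose i * (m + 1 - i) = (m + 1) * m.choose i := by
    have h1 := Nat.choose_succ_right_eq (m + 1) i
    have h2 := Nat.add_one_mul_choose_eq m i
    omega
  have h1 : ((m:ℚ) + 1) ≠ 0 := by positivity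
  have h2 : ((m + 1 - i : ℕ) : ℚ) ≠ 0 := by
    have : 0 < m + 1 - i := by omega
    exact_mod_cast this.ne'
  field_simp
  have := congrArg (fun x : ℕ => (x : ℚ)) key
  push_cast at this ⊢
  linarith [this]

lemma bernoulli_key (m N : ℕ) :
    (N : ℚ) * bernoulli m = (∑ k ∈ range N, (k : ℚ) ^ m)
      - ∑ i ∈ range m, (m.choose i : ℚ) * bernoulli i * (N : ℚ) ^ (m + 1 - i)
          / ((m + 1 - i : ℕ) : ℚ) := by
  rw [sum_range_pow N m, Finset.sum_range_succ]
  have hlast : bernoulli m * ((m + 1).choose m : ℚ) * (N : ℚ) ^ (m + 1 - m) / (m + 1)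
      = (N : ℚ) * bernoulli m := by
    rw [Nat.choose_succ_self_right]
    have : m + 1 - m = 1 := by omega
    rw [this, pow_one]
    have h1 : ((m:ℚ) + 1) ≠ 0 := by positivity
    field_simp
    push_cast
    ring
  have hsum : ∀ i ∈ range m,
      bernoulli i * ((m + 1).choose i : ℚ) * (N : ℚ) ^ (m + 1 - i) / (m + 1)
      = (m.choose i : ℚ) * bernoulli i * (N : ℚ) ^ (m + 1 - i) / ((m + 1 - i : ℕ) : ℚ) := by
    intro i hi
    rw [Finset.mem_range] at hi
    rw [show bernoulli i * ((m + 1).choose i : ℚ) * (N : ℚ) ^ (m + 1 - i) / (m + 1)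
        = bernoulli i * (N : ℚ) ^ (m + 1 - i) * (((m + 1).choose i : ℚ) / (m + 1)) from by ring,
      choose_cast_div m i hi]
    ring
  rw [Finset.sum_congr rfl hsum, hlast]
  ring

variable {p : ℕ} [hp : Fact p.Prime]

lemma padicNorm_pow (q : ℚ) (n : ℕ) : padicNorm p (q ^ n) = padicNorm p q ^ n := by
  induction n with
  | zero => simp [padicNorm.one]
  | succ k ih => rw [pow_succ, pow_succ, padicNorm.mul, ih]

lemma padicNorm_nat_eq (j : ℕ) (hj : j ≠ 0) :
    padicNorm p (j : ℚ) = (p : ℚ) ^ (-(padicValNat p j : ℤ)) := by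
  rw [padicNorm.eq_zpow_of_nonzero (by exact_mod_cast hj), padicValRat.of_nat]

lemma term_norm_le {i m : ℕ} (c : ℕ) (hj : i < m)
    (hB : padicNorm p (bernoulli i) ≤ (p : ℚ))
    (hc : padicValNat p (m + 1 - i) + c ≤ m + 1 - i) :
    padicNorm p ((m.choose i : ℚ) * bernoulli i * (p : ℚ) ^ (m + 1 - i) / ((m + 1 - i : ℕ) : ℚ))
      ≤ (p : ℚ) ^ (1 - (c : ℤ)) := by
  have hp1 : (1 : ℚ) < p := by exact_mod_cast hp.out.one_lt
  have hp0 : (0 : ℚ) < p := by linarith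
  by_cases hBz : bernoulli i = 0
  · rw [hBz]
    simp only [mul_zero, zero_mul, zero_div, padicNorm.zero]
    positivity
  · set j := m + 1 - i with hjdef
    have hjz : j ≠ 0 := by omega
    rw [padicNorm.div, padicNorm.mul, padicNorm.mul, padicNorm_pow,
      padicNorm.padicNorm_p_of_prime, padicNorm_nat_eq j hjz]
    set v : ℤ := (padicValNat p j : ℤ) with hv
    have hnormC : padicNorm p ((m.choose i : ℚ)) ≤ 1 := padicNorm.of_nat _
    have hnormC0 : 0 ≤ padicNorm p ((m.choose i : ℚ)) := padicNorm.nonneg _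
    have hB0 : 0 ≤ padicNorm p (bernoulli i) := padicNorm.nonneg _
    have hpow : ((p : ℚ)⁻¹) ^ j = (p : ℚ) ^ (-(j : ℤ)) := by
      rw [inv_pow, ← zpow_natCast, ← zpow_neg]
    have key : padicNorm p ((m.choose i : ℚ)) * padicNorm p (bernoulli i) * (p : ℚ)⁻¹ ^ j
        / (p : ℚ) ^ (-v) ≤ (p:ℚ) * ((p:ℚ)⁻¹ ^ j / (p:ℚ) ^ (-v)) := by
      have hpos : (0:ℚ) < (p : ℚ)⁻¹ ^ j / (p : ℚ) ^ (-v) := by positivity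
      have : padicNorm p ((m.choose i : ℚ)) * padicNorm p (bernoulli i) ≤ (p:ℚ) := by
        calc padicNorm p ((m.choose i : ℚ)) * padicNorm p (bernoulli i)
            ≤ 1 * (p:ℚ) := by
              apply mul_le_mul hnormC hB (padicNorm.nonneg _) (by norm_num)
          _ = (p:ℚ) := one_mul _
      calc padicNorm p ((m.choose i : ℚ)) * padicNorm p (bernoulli i) * (p : ℚ)⁻¹ ^ j
            / (p : ℚ) ^ (-v)
          = (padicNorm p ((m.choose i : ℚ)) * padicNorm p (bernoulli i))
              * ((p : ℚ)⁻¹ ^ j / (p : ℚ) ^ (-v)) := by ring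
        _ ≤ (p:ℚ) * ((p:ℚ)⁻¹ ^ j / (p:ℚ) ^ (-v)) := by
            apply mul_le_mul_of_nonneg_right this (le_of_lt hpos)
    refine key.trans ?_
    rw [hpow]
    have heq : (p:ℚ) * ((p:ℚ) ^ (-(j:ℤ)) / (p:ℚ) ^ (-v)) = (p:ℚ) ^ ((1:ℤ) + (-(j:ℤ)) - (-v)) := by
      rw [zpow_sub₀ (ne_of_gt hp0), zpow_add₀ (ne_of_gt hp0), zpow_one]; ring
    rw [heq]
    apply zpow_le_zpow_right₀ (le_of_lt hp1)
    have : (v : ℤ) + (c : ℤ) ≤ (j : ℤ) := by rw [hv]; exact_mod_cast hc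
    omega



lemma bernoulli_padicNorm_le (m : ℕ) : padicNorm p (bernoulli m) ≤ (p : ℚ) := by
  have hp1 : (1 : ℚ) < p := by exact_mod_cast hp.out.one_lt
  have hp0 : (0 : ℚ) < p := by linarith
  induction m using Nat.strong_induction_on with
  | _ m ih =>
    rcases Nat.eq_zero_or_pos m with rfl | hm
    · rw [bernoulli_zero, padicNorm.one]; linarith
    -- use the key identity with N = p
    have hkey := bernoulli_key m p
    have hnorm : padicNorm p ((p:ℚ) * bernoulli m) ≤ 1 := by
      rw [hkey]
      apply padicNorm.sub.trans
      apply max_le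
      · -- the power sum is a natural number
        have : (∑ k ∈ range p, (k : ℚ) ^ m) = ((∑ k ∈ range p, k ^ m : ℕ) : ℚ) := by push_cast; rfl
        rw [this]
        exact padicNorm.of_nat _
      · apply padicNorm.sum_le ⟨0, Finset.mem_range.mpr hm⟩
        intro i hi
        rw [Finset.mem_range] at hi
        have := term_norm_le (p := p) 1 hi (ih i hi) ?_
        · simpa using this
        · have h1 : 1 ≤ m + 1 - i := by omega
          have := padicValNat_lt p hp.out.two_le h1
          omega
    rw [padicNorm.mul, padicNorm.padicNorm_p_of_prime] at hnorm
    calc padicNorm p (bernoulli m) = (p:ℚ) * ((p:ℚ)⁻¹ * padicNorm p (bernoulli m)) := by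
          field_simp
      _ ≤ (p:ℚ) * 1 := by
          apply mul_le_mul_of_nonneg_left hnorm (le_of_lt hp0)
      _ = (p:ℚ) := mul_one _






lemma zmod_sum_pow_eq_zero {m : ℕ} (hm : 0 < m) (hnd : ¬ (p - 1) ∣ m) :
    ∑ x : ZMod p, x ^ m = 0 := by
  classical
  let φ : (ZMod p)ˣ ↪ ZMod p := ⟨fun x ↦ x, Units.val_injective⟩
  have himg : univ.map φ = univ \ {0} := by
    ext x
    simp only [mem_map, mem_univ, Function.Embedding.coeFn_mk, true_and, mem_sdiff,
      mem_singleton, φ]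
    exact isUnit_iff_ne_zero
  calc ∑ x : ZMod p, x ^ m
      = ∑ x ∈ univ \ {(0 : ZMod p)}, x ^ m := by
        rw [← sum_sdiff (Finset.subset_univ ({0} : Finset (ZMod p))), sum_singleton,
          zero_pow hm.ne', add_zero]
    _ = ∑ x : (ZMod p)ˣ, ((x : ZMod p)) ^ m := by
        rw [← himg, Finset.sum_map]
        rfl
    _ = 0 := by
        have := FiniteField.sum_pow_units (ZMod p) m
        rw [ZMod.card] at this
        rw [this, if_neg hnd]

lemma sum_pow_cast_eq (m : ℕ) :
    ((∑ k ∈ range p, k ^ m : ℕ) : ZMod p) = ∑ x : ZMod p, x ^ m := by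
  push_cast
  apply Finset.sum_nbij' (i := fun (k : ℕ) => (k : ZMod p)) (j := fun (x : ZMod p) => x.val)
  · intro a _; exact Finset.mem_univ _
  · intro x _
    rw [Finset.mem_range]
    have : NeZero p := ⟨hp.out.pos.ne'⟩
    exact ZMod.val_lt x
  · intro a ha
    rw [Finset.mem_range] at ha
    exact ZMod.val_cast_of_lt ha
  · intro x _
    have : NeZero p := ⟨hp.out.pos.ne'⟩
    exact ZMod.natCast_rightInverse x
  · intro a _; rfl

lemma bernoulli_padicNorm_le_one {m : ℕ} (hm : 0 < m) (hodd : p ≠ 2)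
    (hnd : ¬ (p - 1) ∣ m) : padicNorm p (bernoulli m) ≤ 1 := by
  have hp0 : (0 : ℚ) < p := by exact_mod_cast hp.out.pos
  have hnorm : padicNorm p ((p:ℚ) * bernoulli m) ≤ (p : ℚ) ^ (-1 : ℤ) := by
    rw [bernoulli_key m p]
    apply padicNorm.sub.trans
    apply max_le
    · -- p divides the power sum
      have hdvd : p ∣ ∑ k ∈ range p, k ^ m := by
        have := sum_pow_cast_eq (p := p) m
        rw [zmod_sum_pow_eq_zero hm hnd] at this
        exact (ZMod.natCast_eq_zero_iff _ p).mp this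
      have : (∑ k ∈ range p, (k : ℚ) ^ m) = (((∑ k ∈ range p, k ^ m : ℕ) : ℤ) : ℚ) := by
        push_cast; rfl
      rw [this]
      have := (padicNorm.dvd_iff_norm_le (p := p) (n := 1)
        (z := (∑ k ∈ range p, k ^ m : ℕ))).mp (by rw [pow_one]; exact_mod_cast hdvd)
      simpa using this
    · apply padicNorm.sum_le ⟨0, Finset.mem_range.mpr hm⟩
      intro i hi
      rw [Finset.mem_range] at hi
      have hc : padicValNat p (m + 1 - i) + 2 ≤ m + 1 - i := by
        apply padicValNat_add_two_le p hp.out.two_le (by omega)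
        intro h; exact absurd h hodd
      have := term_norm_le 2 hi (bernoulli_padicNorm_le i) hc
      simpa using this
  rw [padicNorm.mul, padicNorm.padicNorm_p_of_prime] at hnorm
  have h2 : (p:ℚ)⁻¹ * padicNorm p (bernoulli m) ≤ (p:ℚ)⁻¹ := by
    simpa [zpow_neg, zpow_one] using hnorm
  calc padicNorm p (bernoulli m) = (p:ℚ) * ((p:ℚ)⁻¹ * padicNorm p (bernoulli m)) := by
        field_simp
    _ ≤ (p:ℚ) * (p:ℚ)⁻¹ := mul_le_mul_of_nonneg_left h2 (le_of_lt hp0)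
    _ = 1 := by field_simp

lemma one_sub_two_pow_norm {m : ℕ} (hodd : p ≠ 2) (hd : (p - 1) ∣ m) :
    padicNorm p ((1 : ℚ) - 2 ^ m) ≤ (p : ℚ)⁻¹ := by
  have h2 : (2 : ZMod p) ≠ 0 := by
    intro h
    have := (ZMod.natCast_eq_zero_iff 2 p).mp (by exact_mod_cast h)
    have := (Nat.prime_dvd_prime_iff_eq hp.out Nat.prime_two).mp this
    exact hodd this
  obtain ⟨t, rfl⟩ := hd
  have hfermat : (2 : ZMod p) ^ ((p - 1) * t) = 1 := by
    rw [pow_mul, ZMod.pow_card_sub_one_eq_one h2, one_pow]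
  have hdvd : (p : ℤ) ∣ (1 - 2 ^ ((p - 1) * t) : ℤ) := by
    have : ((1 - 2 ^ ((p - 1) * t) : ℤ) : ZMod p) = 0 := by
      push_cast
      rw [hfermat]; ring
    exact (ZMod.intCast_zmod_eq_zero_iff_dvd _ p).mp this
  have := (padicNorm.dvd_iff_norm_le (p := p) (n := 1)
    (z := (1 - 2 ^ ((p - 1) * t) : ℤ))).mp (by rw [pow_one]; exact_mod_cast hdvd)
  have hcast : (((1 - 2 ^ ((p - 1) * t) : ℤ)) : ℚ) = (1 : ℚ) - 2 ^ ((p - 1) * t) := by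
    push_cast; ring
  rw [hcast] at this
  simpa using this

/-- For odd primes, the Genocchi-type quantity is a p-adic integer. -/
lemma genocchi_norm_le_one_odd {m : ℕ} (hm : 0 < m) (hodd : p ≠ 2) :
    padicNorm p (2 * (1 - 2 ^ m) * bernoulli m) ≤ 1 := by
  have hp0 : (0 : ℚ) < p := by exact_mod_cast hp.out.pos
  rw [padicNorm.mul, padicNorm.mul]
  have hn2 : padicNorm p (2 : ℚ) ≤ 1 := by
    have := padicNorm.of_nat (p := p) 2
    simpa using this
  by_cases hd : (p - 1) ∣ m
  · have h1 := one_sub_two_pow_norm (p := p) hodd hd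
    have h2 := bernoulli_padicNorm_le (p := p) m
    calc padicNorm p 2 * padicNorm p (1 - 2 ^ m) * padicNorm p (bernoulli m)
        ≤ 1 * (p:ℚ)⁻¹ * (p:ℚ) := by
          apply mul_le_mul
          apply mul_le_mul hn2 h1 (padicNorm.nonneg _) (by norm_num)
          exact h2
          exact padicNorm.nonneg _
          positivity
      _ = 1 := by field_simp
  · have h1 : padicNorm p ((1:ℚ) - 2 ^ m) ≤ 1 := by
      have : ((1:ℚ) - 2 ^ m) = (((1 - 2 ^ m : ℤ)) : ℚ) := by push_cast; ring
      rw [this]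
      exact padicNorm.of_int _
    have h2 := bernoulli_padicNorm_le_one hm hodd hd
    calc padicNorm p 2 * padicNorm p (1 - 2 ^ m) * padicNorm p (bernoulli m)
        ≤ 1 * 1 * 1 := by
          apply mul_le_mul
          apply mul_le_mul hn2 h1 (padicNorm.nonneg _) (by norm_num)
          exact h2
          exact padicNorm.nonneg _
          norm_num
      _ = 1 := by norm_num

lemma two_mul_bernoulli_sub_one_norm {m : ℕ} (hm : 2 ≤ m) (heven : Even m) :
    padicNorm 2 (2 * bernoulli m - 1) ≤ 2⁻¹ := by
  have hkey := bernoulli_key m 2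
  have hS : (∑ k ∈ range 2, (k : ℚ) ^ m) = 1 := by
    rw [Finset.sum_range_succ, Finset.sum_range_one]
    norm_num [zero_pow (show m ≠ 0 by omega)]
  rw [hS] at hkey
  have h2 : ((2 : ℕ) : ℚ) = (2 : ℚ) := by norm_num
  rw [h2] at hkey
  have heq : 2 * bernoulli m - 1
      = -(∑ i ∈ range m, (m.choose i : ℚ) * bernoulli i * (2 : ℚ) ^ (m + 1 - i)
          / ((m + 1 - i : ℕ) : ℚ)) := by
    rw [hkey]; ring
  rw [heq, padicNorm.neg]
  apply padicNorm.sum_le ⟨0, Finset.mem_range.mpr (by omega)⟩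
  intro i hi
  rw [Finset.mem_range] at hi
  by_cases hlast : i = m - 1
  · subst hlast
    rcases eq_or_lt_of_le hm with h2m | h4m
    · -- m = 2
      rw [← h2m]
      norm_num [bernoulli_one]
      have : padicValRat 2 (2:ℚ) = 1 := by
        have := padicValRat.self (p := 2) (by norm_num)
        simpa using this
      rw [this]
      norm_num
    · -- m ≥ 3, so m - 1 is odd ≥ 3 (m even)
      have hodd : Odd (m - 1) := by
        rcases heven with ⟨t, ht⟩
        exact ⟨t - 1, by omega⟩
      have hb0 : bernoulli (m - 1) = 0 := by
        rw [bernoulli_eq_bernoulli'_of_ne_one (by omega)]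
        exact bernoulli'_eq_zero_of_odd hodd (by omega)
      rw [hb0]
      simp only [mul_zero, zero_mul, zero_div, padicNorm.zero]
      norm_num
  · -- i ≤ m - 2 so j ≥ 3
    have hc : padicValNat 2 (m + 1 - i) + 2 ≤ m + 1 - i := by
      apply padicValNat_add_two_le 2 le_rfl (by omega)
      intro _; omega
    have := term_norm_le (p := 2) 2 hi (bernoulli_padicNorm_le i) hc
    rw [h2] at this
    simpa using this


lemma exists_int_of_padicNorm_le_one {q : ℚ} (h : ∀ p : ℕ, p.Prime → padicNorm p q ≤ 1) :
    ∃ z : ℤ, (z : ℚ) = q := by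
  by_cases hq : q = 0
  · exact ⟨0, by simp [hq]⟩
  suffices hden : q.den = 1 by
    refine ⟨q.num, ?_⟩
    have := Rat.num_div_den q
    rw [hden] at this
    simpa using this
  by_contra hden
  obtain ⟨p, hprime, hpdvd⟩ := Nat.exists_prime_and_dvd hden
  haveI : Fact p.Prime := ⟨hprime⟩
  have hnum : ¬ (p : ℤ) ∣ q.num := by
    intro hdvd
    have h1 : p ∣ q.num.natAbs := Int.natCast_dvd_natCast.mp (by
      rwa [Int.dvd_natAbs])
    have := Nat.Coprime.eq_one_of_dvd (Nat.Coprime.coprime_dvd_left h1 q.reduced) hpdvd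
    exact hprime.ne_one this
  have hv : padicValRat p q ≤ -1 := by
    have h1 : padicValInt p q.num = 0 := padicValInt.eq_zero_of_not_dvd hnum
    have h2 : 1 ≤ padicValNat p q.den :=
      one_le_padicValNat_of_dvd q.pos.ne' hpdvd
    rw [padicValRat]
    omega
  have hp1 : (1 : ℚ) < p := by exact_mod_cast hprime.one_lt
  have : (p : ℚ) ^ (1 : ℤ) ≤ (p : ℚ) ^ (-padicValRat p q) := by
    apply zpow_le_zpow_right₀ (le_of_lt hp1)
    omega
  rw [zpow_one] at this
  have hle := h p hprime
  rw [padicNorm.eq_zpow_of_nonzero hq] at hle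
  linarith

open Real in
lemma bernoulli_sign (k : ℕ) (hk : k ≠ 0) : 0 < (-1 : ℚ) ^ (k + 1) * bernoulli (2 * k) := by
  have hs := hasSum_zeta_nat hk
  have hterm1 : (1 : ℝ) ≤ (-1 : ℝ) ^ (k + 1) * (2 : ℝ) ^ (2 * k - 1) * π ^ (2 * k) *
      bernoulli (2 * k) / ((2 * k).factorial : ℝ) := by
    have h := le_hasSum hs 1 (fun i _ => by positivity)
    simpa using h
  have hc : (0 : ℝ) < (2 : ℝ) ^ (2 * k - 1) * π ^ (2 * k) / ((2 * k).factorial : ℝ) := by positivity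
  have hre : (-1 : ℝ) ^ (k + 1) * (2 : ℝ) ^ (2 * k - 1) * π ^ (2 * k) *
      (bernoulli (2 * k) : ℝ) / ((2 * k).factorial : ℝ)
      = ((-1 : ℝ) ^ (k + 1) * (bernoulli (2 * k) : ℝ)) *
        ((2 : ℝ) ^ (2 * k - 1) * π ^ (2 * k) / ((2 * k).factorial : ℝ)) := by ring
  rw [hre] at hterm1
  have hpos : (0 : ℝ) < (-1 : ℝ) ^ (k + 1) * (bernoulli (2 * k) : ℝ) := by
    nlinarith [hterm1, hc]
  have hcast : (((-1 : ℚ) ^ (k + 1) * bernoulli (2 * k) : ℚ) : ℝ)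
      = (-1 : ℝ) ^ (k + 1) * (bernoulli (2 * k) : ℝ) := by push_cast; ring
  have := hpos
  rw [← hcast] at this
  exact_mod_cast this


lemma genocchi_two_norm {m : ℕ} (hm : 2 ≤ m) (heven : Even m) :
    padicNorm 2 (2 * (1 - 2 ^ m) * bernoulli m - 1) ≤ 2⁻¹ := by
  have h1 := two_mul_bernoulli_sub_one_norm hm heven
  have heq : 2 * (1 - 2 ^ m) * bernoulli m - 1
      = (1 - 2 ^ m) * (2 * bernoulli m - 1) - (2 : ℚ) ^ m := by ring
  rw [heq]
  apply padicNorm.sub.trans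
  apply max_le
  · rw [padicNorm.mul]
    have ha : padicNorm 2 ((1 : ℚ) - 2 ^ m) ≤ 1 := by
      have hcast : ((1 : ℚ) - 2 ^ m) = (((1 - 2 ^ m : ℤ)) : ℚ) := by push_cast; ring
      rw [hcast]; exact padicNorm.of_int _
    calc padicNorm 2 (1 - 2 ^ m) * padicNorm 2 (2 * bernoulli m - 1) ≤ 1 * 2⁻¹ :=
          mul_le_mul ha h1 (padicNorm.nonneg _) (by norm_num)
      _ = 2⁻¹ := one_mul _
  · have hp2 : padicNorm 2 ((2 : ℚ)) = 2⁻¹ := by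
      have := padicNorm.padicNorm_p_of_prime (p := 2)
      simpa using this
    have hpow : padicNorm 2 ((2 : ℚ) ^ m) = (2⁻¹ : ℚ) ^ m := by
      rw [padicNorm_pow, hp2]
    rw [hpow]
    calc (2⁻¹ : ℚ) ^ m ≤ (2⁻¹ : ℚ) ^ 1 :=
          pow_le_pow_of_le_one (by norm_num) (by norm_num) (by omega)
      _ = 2⁻¹ := pow_one _

/-- For every `n ≥ 1`, `(-1)^n G_{2n}` is an odd positive integer,
where `G_{2n} = 2(1-2^{2n})B_{2n}` is the `2n`-th Genocchi number. -/
theorem neg_one_pow_mul_genocchi_odd_pos :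
    ∀ n : ℕ, 1 ≤ n → ∃ m : ℤ, Odd m ∧ 0 < m ∧
      (m : ℚ) = (-1) ^ n * (2 * (1 - 2 ^ (2 * n)) * bernoulli (2 * n)) := by
  intro n hn
  set q : ℚ := 2 * (1 - 2 ^ (2 * n)) * bernoulli (2 * n) with hq
  have hm2 : 2 ≤ 2 * n := by omega
  have heven : Even (2 * n) := ⟨n, by ring⟩
  have h2 := genocchi_two_norm hm2 heven
  have hall : ∀ p : ℕ, p.Prime → padicNorm p q ≤ 1 := by
    intro p hprime
    haveI : Fact p.Prime := ⟨hprime⟩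
    by_cases hp2 : p = 2
    · subst hp2
      have hsplit : q = (q - 1) + 1 := by ring
      rw [hsplit]
      apply padicNorm.nonarchimedean.trans
      apply max_le
      · exact h2.trans (by norm_num)
      · rw [padicNorm.one]
    · exact genocchi_norm_le_one_odd (by omega) hp2
  obtain ⟨z, hz⟩ := exists_int_of_padicNorm_le_one hall
  have hzodd : Odd z := by
    have hcast : ((z - 1 : ℤ) : ℚ) = q - 1 := by push_cast; rw [hz]
    have hnorm : padicNorm 2 (((z - 1 : ℤ) : ℚ)) ≤ ((2 : ℕ) : ℚ) ^ (-(1 : ℤ)) := by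
      rw [hcast]
      refine h2.trans (le_of_eq ?_)
      norm_num
    have hdvd : (((2 : ℕ) ^ 1 : ℕ) : ℤ) ∣ (z - 1) :=
      (padicNorm.dvd_iff_norm_le (p := 2) (n := 1) (z := z - 1)).mpr hnorm
    rw [pow_one] at hdvd
    obtain ⟨t, ht⟩ := hdvd
    exact ⟨t, by omega⟩
  have hsign : 0 < (-1 : ℚ) ^ n * q := by
    have hb := bernoulli_sign n (by omega)
    have hgt : (1 : ℚ) < 2 ^ (2 * n) := by
      have : (2 : ℚ) ^ 1 ≤ 2 ^ (2 * n) := pow_le_pow_right₀ (by norm_num) (by omega)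
      norm_num at this ⊢
      linarith
    have hre : (-1 : ℚ) ^ n * q = (2 * (2 ^ (2 * n) - 1)) * ((-1 : ℚ) ^ (n + 1) * bernoulli (2 * n)) := by
      rw [hq]; ring
    rw [hre]
    apply mul_pos (by linarith) hb
  refine ⟨(-1) ^ n * z, ?_, ?_, ?_⟩
  · exact (Odd.pow (⟨-1, by ring⟩ : Odd (-1 : ℤ))).mul hzodd
  · have hcast : ((((-1 : ℤ)) ^ n * z : ℤ) : ℚ) = (-1 : ℚ) ^ n * q := by push_cast; rw [hz]
    have : (0 : ℚ) < ((((-1 : ℤ)) ^ n * z : ℤ) : ℚ) := by rw [hcast]; exact hsign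
    exact_mod_cast this
  · push_cast
    rw [hz]
end

section
/- An odd prime p is G-regular if and only if p is B-regular and the multiplicative order of 4 modulo p equals (p-1)/2. -/
open Finset

/-- The `n`-th Genocchi number `G_n = 2(1-2^n)B_n` (a rational number which is an
integer for even `n`). -/
noncomputable def genocchi (n : ℕ) : ℚ := 2 * (1 - 2 ^ n) * bernoulli n

/-- An odd prime `p` is G-irregular if `p` divides one of `G_2, G_4, …, G_{p-3}`. -/
def GIrregular (p : ℕ) : Prop :=
  ∃ k : ℕ, 1 ≤ k ∧ 2 * k ≤ p - 3 ∧ (p : ℤ) ∣ (genocchi (2 * k)).num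

/-- An odd prime `p` is B-irregular if `p` divides the numerator of one of
`B_2, B_4, …, B_{p-3}`. -/
def BIrregular (p : ℕ) : Prop :=
  ∃ k : ℕ, 1 ≤ k ∧ 2 * k ≤ p - 3 ∧ (p : ℤ) ∣ (bernoulli (2 * k)).num

private lemma padic_sum_norm_le {p : ℕ} [Fact p.Prime] {α : Type*} {s : Finset α}
    {f : α → ℚ_[p]} {t : ℝ} (ht : 0 ≤ t) (h : ∀ i ∈ s, ‖f i‖ ≤ t) :
    ‖∑ i ∈ s, f i‖ ≤ t := by
  classical
  induction s using Finset.induction_on with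
  | empty => simpa using ht
  | @insert a s ha ih =>
    rw [Finset.sum_insert ha]
    exact le_trans (Padic.nonarchimedean _ _)
      (max_le (h _ (Finset.mem_insert_self _ _))
        (ih fun i hi => h i (Finset.mem_insert_of_mem hi)))

private lemma padic_norm_natCast_eq_one {p n : ℕ} [hp : Fact p.Prime] (h : ¬ p ∣ n) :
    ‖((n : ℕ) : ℚ_[p])‖ = 1 := by
  have h1 : ‖((n : ℤ) : ℚ_[p])‖ ≤ 1 := Padic.norm_int_le_one _
  have h2 : ¬ ‖((n : ℤ) : ℚ_[p])‖ < 1 := by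
    rw [Padic.norm_intCast_lt_one_iff]
    exact_mod_cast h
  push_cast at h1 h2
  linarith [lt_or_ge (‖((n : ℕ) : ℚ_[p])‖) 1]

private lemma bernoulli_padic_norm_le_one (p : ℕ) [hp : Fact p.Prime] :
    ∀ n, n < p - 1 → ‖((bernoulli n : ℚ) : ℚ_[p])‖ ≤ 1 := by
  intro n
  induction n using Nat.strong_induction_on with
  | _ n ih =>
    intro hn
    have hp2 : 2 ≤ p := hp.out.two_le
    have hn1 : n + 1 < p := by omega
    -- the sum S = ∑_{k<p} k^n is divisible by p
    have hSdvd : (p : ℤ) ∣ ((∑ k ∈ range p, k ^ n : ℕ) : ℤ) := by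
      have h0 : ((∑ k ∈ range p, k ^ n : ℕ) : ZMod p) = 0 := by
        push_cast
        have heq : ∑ k ∈ range p, (k : ZMod p) ^ n = ∑ x : ZMod p, x ^ n := by
          refine Finset.sum_nbij' (fun i => (i : ZMod p)) (fun x => x.val) ?_ ?_ ?_ ?_ ?_
          · intro a _; exact Finset.mem_univ _
          · intro x _; exact Finset.mem_range.mpr (ZMod.val_lt x)
          · intro a ha; exact ZMod.val_natCast_of_lt (Finset.mem_range.mp ha)
          · intro x _; exact ZMod.natCast_zmod_val x
          · intro a _; rfl
        rw [heq]
        have hcard : Fintype.card (ZMod p) = p := ZMod.card p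
        have := FiniteField.sum_pow_lt_card_sub_one (K := ZMod p) n (by rw [hcard]; exact hn)
        simpa [hcard] using this
      exact_mod_cast (ZMod.natCast_eq_zero_iff _ p).mp h0
    have hSnorm : ‖(((∑ k ∈ range p, k ^ n : ℕ) : ℤ) : ℚ_[p])‖ ≤ (p : ℝ)⁻¹ := by
      have := (Padic.norm_int_le_pow_iff_dvd (p := p)
        ((∑ k ∈ range p, k ^ n : ℕ) : ℤ) 1).mpr (by simpa using hSdvd)
      simpa using this
    -- Faulhaber rearranged
    have hchoose : ((n + 1).choose n : ℚ) = (n + 1 : ℚ) := by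
      rw [Nat.choose_succ_self_right]; push_cast; ring
    have hne : ((n : ℚ) + 1) ≠ 0 := by positivity
    have hQ : (bernoulli n) * (p : ℚ) =
        ((∑ k ∈ range p, k ^ n : ℕ) : ℚ) -
          ∑ i ∈ range n, bernoulli i * ((n + 1).choose i : ℚ) * (p : ℚ) ^ (n + 1 - i) / (n + 1) := by
      have hF := sum_range_pow p n
      rw [Finset.sum_range_succ] at hF
      have hlast : bernoulli n * ((n + 1).choose n : ℚ) * (p : ℚ) ^ (n + 1 - n) / (n + 1)
          = bernoulli n * (p : ℚ) := by
        rw [hchoose]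
        have h1 : n + 1 - n = 1 := by omega
        rw [h1]
        field_simp
      rw [hlast] at hF
      push_cast
      rw [hF]
      ring
    -- cast to ℚ_[p]
    have hQp := congrArg (fun q : ℚ => (q : ℚ_[p])) hQ
    simp only [Rat.cast_mul, Rat.cast_sub, Rat.cast_sum, Rat.cast_div, Rat.cast_pow,
      Rat.cast_natCast, Rat.cast_add, Rat.cast_one, Rat.cast_intCast] at hQp
    have hbound : ‖((bernoulli n : ℚ) : ℚ_[p]) * (p : ℚ_[p])‖ ≤ (p : ℝ)⁻¹ := by
      rw [hQp, sub_eq_add_neg]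
      refine le_trans (Padic.nonarchimedean _ _) (max_le ?_ ?_)
      · exact_mod_cast hSnorm
      · rw [norm_neg]
        refine padic_sum_norm_le (by positivity) ?_
        intro i hi
        have hi' : i < n := Finset.mem_range.mp hi
        rw [norm_div, norm_mul, norm_mul]
        have hb : ‖((bernoulli i : ℚ) : ℚ_[p])‖ ≤ 1 := ih i hi' (by omega)
        have hc : ‖(((n + 1).choose i : ℕ) : ℚ_[p])‖ ≤ 1 := by
          have := Padic.norm_int_le_one (p := p) (((n + 1).choose i : ℕ) : ℤ)
          push_cast at this ⊢
          exact this
        have hd : ‖((n : ℚ_[p]) + 1)‖ = 1 := by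
          have : ¬ p ∣ (n + 1) := Nat.not_dvd_of_pos_of_lt (by omega) hn1
          have := padic_norm_natCast_eq_one (p := p) this
          push_cast at this
          exact this
        have hpow : ‖(p : ℚ_[p]) ^ (n + 1 - i)‖ ≤ (p : ℝ)⁻¹ := by
          rw [norm_pow, Padic.norm_p]
          have hip : (p : ℝ)⁻¹ ≤ 1 := by
            rw [inv_le_one_iff₀]; right; exact_mod_cast hp.out.one_le
          have h1 : 1 ≤ n + 1 - i := by omega
          calc ((p : ℝ)⁻¹) ^ (n + 1 - i) ≤ ((p:ℝ)⁻¹) ^ 1 := by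
                apply pow_le_pow_of_le_one (by positivity) hip h1
            _ = (p : ℝ)⁻¹ := pow_one _
        rw [hd, div_one]
        calc ‖((bernoulli i : ℚ) : ℚ_[p])‖ * ‖(((n+1).choose i : ℕ) : ℚ_[p])‖ *
              ‖(p : ℚ_[p]) ^ (n + 1 - i)‖
            ≤ 1 * 1 * (p : ℝ)⁻¹ :=
              mul_le_mul (mul_le_mul hb hc (norm_nonneg _) zero_le_one) hpow (norm_nonneg _)
                (by norm_num)
          _ = (p : ℝ)⁻¹ := by ring
    rw [norm_mul, Padic.norm_p] at hbound
    have hppos : (0 : ℝ) < (p : ℝ)⁻¹ := by positivity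
    calc ‖((bernoulli n : ℚ) : ℚ_[p])‖
        = ‖((bernoulli n : ℚ) : ℚ_[p])‖ * (p:ℝ)⁻¹ * ((p:ℝ)⁻¹)⁻¹ := by
          field_simp
      _ ≤ (p:ℝ)⁻¹ * ((p:ℝ)⁻¹)⁻¹ := by gcongr
      _ = 1 := by field_simp

private lemma not_dvd_bernoulli_den (p : ℕ) [hp : Fact p.Prime] (n : ℕ) (hn : n < p - 1) :
    ¬ p ∣ (bernoulli n).den := by
  intro hdvd
  set B := bernoulli n with hB
  have hdne : ((B.den : ℚ)) ≠ 0 := by exact_mod_cast (Rat.den_ne_zero B)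
  have hnum : ((B.num : ℚ)) = B * (B.den : ℚ) := by
    have h := Rat.num_div_den B
    rw [div_eq_iff hdne] at h
    exact h
  have hden_norm : ‖((B.den : ℕ) : ℚ_[p])‖ < 1 := by
    have := (Padic.norm_intCast_lt_one_iff (p := p) (k := ((B.den : ℕ) : ℤ))).mpr
      (by exact_mod_cast hdvd)
    push_cast at this
    exact this
  have hBn : ‖(B : ℚ_[p])‖ ≤ 1 := bernoulli_padic_norm_le_one p n hn
  have hnum_norm : ‖((B.num : ℤ) : ℚ_[p])‖ < 1 := by
    have hcast : ((B.num : ℤ) : ℚ_[p]) = (B : ℚ_[p]) * ((B.den : ℕ) : ℚ_[p]) := by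
      have := congrArg (fun q : ℚ => (q : ℚ_[p])) hnum
      push_cast at this ⊢
      exact this
    rw [hcast, norm_mul]
    calc ‖(B : ℚ_[p])‖ * ‖((B.den : ℕ) : ℚ_[p])‖ ≤ 1 * ‖((B.den : ℕ) : ℚ_[p])‖ := by
          apply mul_le_mul_of_nonneg_right hBn (norm_nonneg _)
      _ = ‖((B.den : ℕ) : ℚ_[p])‖ := one_mul _
      _ < 1 := hden_norm
  have hpnum : (p : ℤ) ∣ B.num := Padic.norm_intCast_lt_one_iff.mp hnum_norm
  have hco : Nat.Coprime B.num.natAbs B.den := B.reduced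
  have h1 : p ∣ B.num.natAbs := Int.natCast_dvd_natCast.mp (Int.dvd_natAbs.mpr hpnum)
  have : p ∣ 1 := hco ▸ Nat.dvd_gcd h1 hdvd
  have h2 := Nat.eq_one_of_dvd_one this
  have h3 := hp.out.one_lt
  omega

private lemma dvd_num_intCast_mul (p : ℕ) (hp : p.Prime) (c : ℤ) (q : ℚ)
    (hden : ¬ (p : ℤ) ∣ (q.den : ℤ)) :
    ((p : ℤ) ∣ ((c : ℚ) * q).num ↔ (p : ℤ) ∣ c * q.num) := by
  have pZ : Prime (p : ℤ) := Nat.prime_iff_prime_int.mp hp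
  set r : ℚ := (c : ℚ) * q with hr
  -- key identity: r.num * q.den = c * q.num * r.den
  have hkey : r.num * (q.den : ℤ) = c * q.num * (r.den : ℤ) := by
    have hQ : (r.num : ℚ) * (q.den : ℚ) = (c : ℚ) * (q.num : ℚ) * (r.den : ℚ) := by
      have hrdne : ((r.den : ℚ)) ≠ 0 := by exact_mod_cast (Rat.den_ne_zero r)
      have hqdne : ((q.den : ℚ)) ≠ 0 := by exact_mod_cast (Rat.den_ne_zero q)
      have h1 : (r.num : ℚ) = r * (r.den : ℚ) := by
        have h := Rat.num_div_den r
        rw [div_eq_iff hrdne] at h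
        exact h
      have h2 : (q.num : ℚ) = q * (q.den : ℚ) := by
        have h := Rat.num_div_den q
        rw [div_eq_iff hqdne] at h
        exact h
      rw [h1, h2, hr]; ring
    exact_mod_cast hQ
  have hrden : ¬ (p : ℤ) ∣ (r.den : ℤ) := by
    intro hd
    have : (p : ℤ) ∣ r.num * (q.den : ℤ) := by
      rw [hkey]; exact dvd_mul_of_dvd_right hd _
    rcases pZ.dvd_mul.mp this with h | h
    · -- p divides both num and den of r : contradiction with reduced
      have hco : Nat.Coprime r.num.natAbs r.den := r.reduced
      have h1 : p ∣ r.num.natAbs := Int.natCast_dvd_natCast.mp (Int.dvd_natAbs.mpr h)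
      have h2 : p ∣ r.den := Int.natCast_dvd_natCast.mp hd
      have := hco ▸ Nat.dvd_gcd h1 h2
      have := Nat.eq_one_of_dvd_one this
      exact absurd this (by have := hp.one_lt; omega)
    · exact hden h
  constructor
  · intro h
    have : (p : ℤ) ∣ c * q.num * (r.den : ℤ) := hkey ▸ dvd_mul_of_dvd_left h _
    rcases pZ.dvd_mul.mp this with h' | h'
    · exact h'
    · exact absurd h' hrden
  · intro h
    have : (p : ℤ) ∣ r.num * (q.den : ℤ) := by rw [hkey]; exact dvd_mul_of_dvd_left h _
    rcases pZ.dvd_mul.mp this with h' | h'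
    · exact h'
    · exact absurd h' hden

private lemma genocchi_num_dvd_iff (p : ℕ) (hp : p.Prime) (hp3 : 3 ≤ p) (k : ℕ)
    (hk1 : 1 ≤ k) (hk : 2 * k ≤ p - 3) :
    ((p : ℤ) ∣ (genocchi (2 * k)).num ↔
      ((4 : ZMod p) ^ k = 1 ∨ (p : ℤ) ∣ (bernoulli (2 * k)).num)) := by
  haveI : Fact p.Prime := ⟨hp⟩
  have hn : 2 * k < p - 1 := by omega
  have hden : ¬ (p : ℤ) ∣ ((bernoulli (2 * k)).den : ℤ) := by
    have := not_dvd_bernoulli_den p (2 * k) hn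
    exact fun h => this (Int.natCast_dvd_natCast.mp h)
  have hG : genocchi (2 * k) = (((2 * (1 - 2 ^ (2 * k)) : ℤ)) : ℚ) * bernoulli (2 * k) := by
    unfold genocchi; push_cast; ring
  rw [hG, dvd_num_intCast_mul p hp _ _ hden]
  have pZ : Prime (p : ℤ) := Nat.prime_iff_prime_int.mp hp
  rw [pZ.dvd_mul]
  have h4 : (4 : ZMod p) ^ k = (2 : ZMod p) ^ (2 * k) := by
    rw [show (4 : ZMod p) = 2 ^ 2 by norm_num, ← pow_mul]
  constructor
  · rintro (h | h)
    · left
      rcases pZ.dvd_mul.mp h with h2 | h2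
      · exfalso
        have hle := Int.le_of_dvd (by norm_num) h2
        have : p ≤ 2 := by exact_mod_cast hle
        omega
      · have h0 : ((1 - 2 ^ (2 * k) : ℤ) : ZMod p) = 0 :=
          (ZMod.intCast_zmod_eq_zero_iff_dvd _ p).mpr h2
        push_cast at h0
        rw [h4]
        rw [sub_eq_zero] at h0
        exact h0.symm
    · exact Or.inr h
  · rintro (h | h)
    · left
      apply dvd_mul_of_dvd_right
      rw [← ZMod.intCast_zmod_eq_zero_iff_dvd]
      push_cast
      rw [sub_eq_zero, ← h4]
      exact h.symm
    · exact Or.inr h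

/-- An odd prime `p` is G-regular iff it is B-regular and the
multiplicative order of `4` modulo `p` equals `(p-1)/2`. -/
theorem gRegular_iff_bRegular_and_orderOf_four (p : ℕ) (hp : p.Prime) (hodd : Odd p) :
    ¬ GIrregular p ↔ (¬ BIrregular p ∧ orderOf (4 : ZMod p) = (p - 1) / 2) := by
  haveI : Fact p.Prime := ⟨hp⟩
  have hpmod : p % 2 = 1 := Nat.odd_iff.mp hodd
  have hp3 : 3 ≤ p := by
    have := hp.two_le
    omega
  have h2ne : (2 : ZMod p) ≠ 0 := by
    have : ¬ p ∣ 2 := fun h => by have := Nat.le_of_dvd (by norm_num) h; omega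
    intro h
    apply this
    have : ((2 : ℕ) : ZMod p) = 0 := by push_cast; exact h
    exact (ZMod.natCast_eq_zero_iff 2 p).mp this
  have h4ne : (4 : ZMod p) = (2 : ZMod p) ^ 2 := by norm_num
  have h4pow : (4 : ZMod p) ^ ((p - 1) / 2) = 1 := by
    rw [h4ne, ← pow_mul]
    have hm : 2 * ((p - 1) / 2) = p - 1 := by omega
    rw [hm]
    exact ZMod.pow_card_sub_one_eq_one h2ne
  have hhalfpos : 0 < (p - 1) / 2 := by omega
  have hord_dvd : orderOf (4 : ZMod p) ∣ (p - 1) / 2 := orderOf_dvd_of_pow_eq_one h4pow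
  have hfin : IsOfFinOrder (4 : ZMod p) :=
    isOfFinOrder_iff_pow_eq_one.mpr ⟨(p - 1) / 2, hhalfpos, h4pow⟩
  have hord_pos : 0 < orderOf (4 : ZMod p) := hfin.orderOf_pos
  constructor
  · intro hG
    constructor
    · rintro ⟨k, hk1, hk2, hB⟩
      exact hG ⟨k, hk1, hk2, (genocchi_num_dvd_iff p hp hp3 k hk1 hk2).mpr (Or.inr hB)⟩
    · by_contra hne
      apply hG
      have hlt : orderOf (4 : ZMod p) < (p - 1) / 2 :=
        lt_of_le_of_ne (Nat.le_of_dvd hhalfpos hord_dvd) hne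
      set k := orderOf (4 : ZMod p) with hk
      have hk2 : 2 * k ≤ p - 3 := by omega
      exact ⟨k, hord_pos, hk2,
        (genocchi_num_dvd_iff p hp hp3 k hord_pos hk2).mpr (Or.inl (pow_orderOf_eq_one _))⟩
  · rintro ⟨hB, hord⟩ ⟨k, hk1, hk2, hGk⟩
    rcases (genocchi_num_dvd_iff p hp hp3 k hk1 hk2).mp hGk with h1 | h1
    · have hdvd : orderOf (4 : ZMod p) ∣ k := orderOf_dvd_of_pow_eq_one h1
      have hle : orderOf (4 : ZMod p) ≤ k := Nat.le_of_dvd (by omega) hdvd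
      rw [hord] at hle
      omega
    · exact hB ⟨k, hk1, hk2, h1⟩
end

section
/- If an odd prime p is B-irregular, then p is G-irregular. -/
lemma prime_dvd_num_mul (p : ℤ) (hp : Prime p) (c : ℤ) (q : ℚ)
    (h : p ∣ q.num) : p ∣ ((c : ℚ) * q).num := by
  have key : ((c : ℚ) * q).num * (q.den : ℤ) = c * q.num * (((c : ℚ) * q).den : ℤ) := by
    have h1 : (((c : ℚ) * q).num : ℚ) = ((c : ℚ) * q) * (((c : ℚ) * q).den : ℚ) := by
      rw [Rat.mul_den_eq_num]
    have h2 : (q.num : ℚ) = q * (q.den : ℚ) := by rw [Rat.mul_den_eq_num]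
    have : ((((c : ℚ) * q).num * (q.den : ℤ) : ℤ) : ℚ)
        = ((c * q.num * (((c : ℚ) * q).den : ℤ) : ℤ) : ℚ) := by
      push_cast
      rw [h1, h2]
      ring
    exact_mod_cast this
  have hd : p ∣ ((c : ℚ) * q).num * (q.den : ℤ) := by
    rw [key]
    exact Dvd.dvd.mul_right (Dvd.dvd.mul_left h c) _
  rcases hp.dvd_mul.mp hd with h' | h'
  · exact h'
  · exfalso
    have hnum : p.natAbs ∣ q.num.natAbs := Int.natAbs_dvd_natAbs.mpr h
    have hden : p.natAbs ∣ q.den := by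
      have := Int.natAbs_dvd_natAbs.mpr h'
      simpa using this
    have := Nat.dvd_gcd hnum hden
    rw [q.reduced] at this
    exact hp.not_unit (Int.isUnit_iff_natAbs_eq.mpr (Nat.dvd_one.mp this))

/-- If an odd prime `p` is B-irregular, then it is G-irregular. -/
theorem bIrregular_imp_gIrregular (p : ℕ) (hp : p.Prime) (hodd : Odd p)
    (hB : BIrregular p) : GIrregular p := by
  obtain ⟨k, hk1, hk2, hdvd⟩ := hB
  refine ⟨k, hk1, hk2, ?_⟩
  have hpZ : Prime (p : ℤ) := Nat.prime_iff_prime_int.1 hp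
  have := prime_dvd_num_mul (p : ℤ) hpZ (2 * (1 - 2 ^ (2 * k))) (bernoulli (2 * k)) hdvd
  simpa [genocchi] using this
end

section
/- Every prime p ≡ 1 (mod 8) is G-irregular, i.e., p divides at least one of the Genocchi numbers G_2, G_4, …, G_{p-3}. -/
open Finset

section Aux

variable {p : ℕ} [hp : Fact p.Prime]


lemma norm_pow_div_eq (j : ℕ) :
    padicNorm p ((p : ℚ) ^ j / ((j : ℚ) + 1)) =
      (p : ℚ) ^ ((padicValNat p (j + 1) : ℤ) - j) := by
  have hp1 : 1 < p := hp.out.one_lt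
  have hppos : (0:ℚ) < p := by exact_mod_cast hp.out.pos
  have hnum : ((p:ℚ)) ^ j ≠ 0 := by positivity
  have hden : ((j:ℚ) + 1) ≠ 0 := by positivity
  have hq : (p : ℚ) ^ j / ((j : ℚ) + 1) ≠ 0 := div_ne_zero hnum hden
  have hcast : ((j:ℚ) + 1) = ((j + 1 : ℕ) : ℚ) := by push_cast; ring
  have hval : padicValRat p ((p : ℚ) ^ j / ((j : ℚ) + 1)) =
      (j : ℤ) - padicValNat p (j + 1) := by
    rw [hcast, padicValRat.div hnum (by rw [← hcast]; exact hden)]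
    rw [padicValRat.pow _, padicValRat.self hp1,
      padicValRat.of_nat]
    push_cast
    ring
  rw [padicNorm.eq_zpow_of_nonzero hq, hval]
  ring_nf

lemma padicValNat_succ_le (j : ℕ) : padicValNat p (j + 1) ≤ j := by
  have h1 : p ^ padicValNat p (j + 1) ∣ j + 1 := pow_padicValNat_dvd
  have h2 : p ^ padicValNat p (j + 1) ≤ j + 1 := Nat.le_of_dvd (by omega) h1
  have h3 : padicValNat p (j + 1) < 2 ^ padicValNat p (j + 1) :=
    Nat.lt_two_pow_self
  have h4 : 2 ^ padicValNat p (j + 1) ≤ p ^ padicValNat p (j + 1) :=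
    Nat.pow_le_pow_left hp.out.two_le _
  omega

lemma padicValNat_succ_le' (hp3 : 3 ≤ p) (j : ℕ) (hj : 1 ≤ j) :
    padicValNat p (j + 1) + 1 ≤ j := by
  by_contra hcon
  push_neg at hcon
  have hvj : j ≤ padicValNat p (j + 1) := by omega
  have h2 : p ^ padicValNat p (j + 1) ≤ j + 1 :=
    Nat.le_of_dvd (by omega) pow_padicValNat_dvd
  have h5 : p ^ j ≤ p ^ padicValNat p (j + 1) := Nat.pow_le_pow_right hp.out.pos hvj
  have h6 : 3 ^ j ≤ p ^ j := Nat.pow_le_pow_left hp3 _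
  have h7 : j + 2 ≤ 3 ^ j := by
    clear * - hj
    induction j with
    | zero => omega
    | succ n ih =>
      rcases Nat.eq_or_lt_of_le hj with h | h
      · simp [← h]
      · have := ih (by omega)
        have : 3 ^ (n+1) = 3 * 3 ^ n := by ring
        omega
  omega

lemma norm_pow_div_le (j : ℕ) : padicNorm p ((p : ℚ) ^ j / ((j : ℚ) + 1)) ≤ 1 := by
  rw [norm_pow_div_eq]
  have h := padicValNat_succ_le (p := p) j
  calc (p:ℚ) ^ ((padicValNat p (j + 1) : ℤ) - j) ≤ (p:ℚ) ^ (0:ℤ) := by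
        apply zpow_le_zpow_right₀ (by exact_mod_cast hp.out.one_lt.le)
        omega
    _ = 1 := zpow_zero _

lemma norm_pow_div_le' (hp3 : 3 ≤ p) (j : ℕ) (hj : 1 ≤ j) :
    padicNorm p ((p : ℚ) ^ j / ((j : ℚ) + 1)) ≤ (p:ℚ)⁻¹ := by
  rw [norm_pow_div_eq]
  have h := padicValNat_succ_le' hp3 j hj
  calc (p:ℚ) ^ ((padicValNat p (j + 1) : ℤ) - j) ≤ (p:ℚ) ^ (-1:ℤ) := by
        apply zpow_le_zpow_right₀ (by exact_mod_cast hp.out.one_lt.le)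
        omega
    _ = (p:ℚ)⁻¹ := zpow_neg_one _



lemma choose_key {m i : ℕ} (hi : i ≤ m) :
    (m + 1) * m.choose i = (m + 1).choose i * (m + 1 - i) := by
  have h1 := Nat.add_one_mul_choose_eq m (m - i)
  rw [Nat.choose_symm hi] at h1
  have h2 : m - i + 1 = m + 1 - i := by omega
  rw [h2, Nat.choose_symm (by omega)] at h1
  exact h1

lemma bernoulli_rearrange (m : ℕ) :
    (p:ℚ) * bernoulli m =
      (∑ x ∈ range p, (x:ℚ) ^ m) -
      ∑ i ∈ range m, ((p:ℚ) * bernoulli i) * (m.choose i : ℚ) *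
        ((p:ℚ) ^ (m - i) / (((m - i : ℕ) : ℚ) + 1)) := by
  have h := sum_range_pow p m
  rw [sum_range_succ] at h
  have hm1 : ((m:ℚ) + 1) ≠ 0 := by positivity
  have hlast : bernoulli m * ((m + 1).choose m : ℚ) * (p:ℚ) ^ (m + 1 - m) / (m + 1)
      = (p:ℚ) * bernoulli m := by
    have h1 : m + 1 - m = 1 := by omega
    rw [h1, Nat.choose_succ_self_right]
    field_simp
    push_cast; ring
  rw [hlast] at h
  have hterm : ∀ i ∈ range m,
      bernoulli i * (((m + 1).choose i : ℕ) : ℚ) * (p:ℚ) ^ (m + 1 - i) / (m + 1)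
      = ((p:ℚ) * bernoulli i) * (m.choose i : ℚ) *
        ((p:ℚ) ^ (m - i) / (((m - i : ℕ) : ℚ) + 1)) := by
    intro i hi
    have hi' : i < m := mem_range.mp hi
    have hkey : ((m + 1 : ℕ) : ℚ) * (m.choose i : ℚ)
        = ((m + 1).choose i : ℚ) * ((m + 1 - i : ℕ) : ℚ) := by
      exact_mod_cast congrArg (Nat.cast (R := ℚ)) (choose_key hi'.le)
    have hexp : m + 1 - i = (m - i) + 1 := by omega
    have hsub : ((m + 1 - i : ℕ) : ℚ) = ((m - i : ℕ) : ℚ) + 1 := by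
      rw [hexp]; push_cast; ring
    have hden : (((m - i : ℕ) : ℚ) + 1) ≠ 0 := by positivity
    have hm1' : ((m:ℚ) + 1) = ((m + 1 : ℕ) : ℚ) := by push_cast; ring
    have hkey' : ((m:ℚ) + 1) * (m.choose i : ℚ)
        = ((m + 1).choose i : ℚ) * (((m - i : ℕ) : ℚ) + 1) := by
      rw [hm1', ← hsub]; exact hkey
    rw [hexp, pow_succ]
    field_simp
    linear_combination (-(bernoulli i * (p:ℚ) ^ (m - i) * (p:ℚ))) * hkey'
  rw [Finset.sum_congr rfl hterm] at h
  linarith [h]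



lemma p_dvd_sum_pow {m : ℕ} (hm : 0 < m) (hnd : ¬ (p - 1) ∣ m) :
    p ∣ ∑ x ∈ range p, x ^ m := by
  classical
  have h0 : ((∑ x ∈ range p, x ^ m : ℕ) : ZMod p) = 0 := by
    push_cast
    have hbij : ∑ x ∈ range p, ((x : ZMod p)) ^ m = ∑ y : ZMod p, y ^ m := by
      refine Finset.sum_nbij' (i := fun x => (x : ZMod p)) (j := fun y => y.val)
        (fun a _ => mem_univ _) (fun y _ => mem_range.mpr (ZMod.val_lt y))
        (fun a ha => ZMod.val_cast_of_lt (mem_range.mp ha))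
        (fun y _ => ZMod.natCast_rightInverse y) (fun a _ => rfl)
    -- sum over the field equals sum over units since 0 ^ m = 0
    let φ : (ZMod p)ˣ ↪ ZMod p := ⟨fun x ↦ x, fun _ _ h => Units.ext h⟩
    have hmap : univ.map φ = univ \ {0} := by
      ext x
      simp only [mem_map, mem_univ, Function.Embedding.coeFn_mk, true_and, mem_sdiff,
        mem_singleton, φ]; exact isUnit_iff_ne_zero
    have hsplit : ∑ y : ZMod p, y ^ m = ∑ x ∈ univ \ {0}, x ^ m := by
      rw [Finset.sum_sdiff_eq_sub (Finset.subset_univ _)]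
      simp [zero_pow hm.ne']
    rw [hbij, hsplit, ← hmap, Finset.sum_map]
    have := FiniteField.sum_pow_units (ZMod p) m
    rw [ZMod.card] at this
    show ∑ u : (ZMod p)ˣ, ((u : ZMod p)) ^ m = 0
    rw [this, if_neg hnd]
  exact (ZMod.natCast_eq_zero_iff _ _).mp h0

lemma norm_mul_bernoulli_le_one : ∀ m, padicNorm p ((p:ℚ) * bernoulli m) ≤ 1 := by
  intro m
  induction m using Nat.strong_induction_on with
  | _ m ih =>
    rw [bernoulli_rearrange]
    refine le_trans padicNorm.sub (max_le ?_ ?_)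
    · have : (∑ x ∈ range p, (x:ℚ) ^ m) = ((∑ x ∈ range p, x ^ m : ℕ) : ℚ) := by
        push_cast; ring
      rw [this]
      exact padicNorm.of_nat _
    · refine padicNorm.sum_le' (fun i hi => ?_) zero_le_one
      rw [padicNorm.mul, padicNorm.mul]
      have h1 := ih i (mem_range.mp hi)
      have h2 : padicNorm p ((m.choose i : ℕ) : ℚ) ≤ 1 := padicNorm.of_nat _
      have h3 : padicNorm p ((p:ℚ) ^ (m - i) / (((m - i : ℕ) : ℚ) + 1)) ≤ 1 :=
        norm_pow_div_le _
      have n2 := padicNorm.nonneg (p := p) ((m.choose i : ℕ) : ℚ)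
      have n3 := padicNorm.nonneg (p := p) ((p:ℚ) ^ (m - i) / (((m - i : ℕ) : ℚ) + 1))
      exact le_trans (mul_le_of_le_one_left n3 (mul_le_one₀ h1 n2 h2)) h3

lemma norm_bernoulli_le_one {m : ℕ} (hp3 : 3 ≤ p) (hm : 0 < m) (hnd : ¬ (p - 1) ∣ m) :
    padicNorm p (bernoulli m) ≤ 1 := by
  have hppos : (0:ℚ) < p := by exact_mod_cast hp.out.pos
  have hinv : (0:ℚ) < (p:ℚ)⁻¹ := by positivity
  have key : padicNorm p ((p:ℚ) * bernoulli m) ≤ (p:ℚ)⁻¹ := by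
    rw [bernoulli_rearrange]
    refine le_trans padicNorm.sub (max_le ?_ ?_)
    · have hc : (∑ x ∈ range p, (x:ℚ) ^ m) = (((∑ x ∈ range p, x ^ m : ℕ) : ℤ) : ℚ) := by
        push_cast; ring
      rw [hc]
      have hd : ((p ^ 1 : ℕ) : ℤ) ∣ ((∑ x ∈ range p, x ^ m : ℕ) : ℤ) := by
        push_cast [pow_one]
        exact_mod_cast Int.natCast_dvd_natCast.mpr (p_dvd_sum_pow hm hnd)
      have := (padicNorm.dvd_iff_norm_le (p := p) (n := 1)).mp hd
      simpa [zpow_neg_one] using this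
    · refine padicNorm.sum_le' (fun i hi => ?_) hinv.le
      rw [padicNorm.mul, padicNorm.mul]
      have h1 := norm_mul_bernoulli_le_one (p := p) i
      have h2 : padicNorm p ((m.choose i : ℕ) : ℚ) ≤ 1 := padicNorm.of_nat _
      have h3 : padicNorm p ((p:ℚ) ^ (m - i) / (((m - i : ℕ) : ℚ) + 1)) ≤ (p:ℚ)⁻¹ :=
        norm_pow_div_le' hp3 _ (by have := mem_range.mp hi; omega)
      have n2 := padicNorm.nonneg (p := p) ((m.choose i : ℕ) : ℚ)
      have n3 := padicNorm.nonneg (p := p) ((p:ℚ) ^ (m - i) / (((m - i : ℕ) : ℚ) + 1))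
      exact le_trans (mul_le_of_le_one_left n3 (mul_le_one₀ h1 n2 h2)) h3
  have hnp : padicNorm p ((p:ℚ) * bernoulli m) = (p:ℚ)⁻¹ * padicNorm p (bernoulli m) := by
    rw [padicNorm.mul, padicNorm.padicNorm_p_of_prime]
  rw [hnp] at key
  calc padicNorm p (bernoulli m) = (p:ℚ) * ((p:ℚ)⁻¹ * padicNorm p (bernoulli m)) := by
        field_simp
    _ ≤ (p:ℚ) * (p:ℚ)⁻¹ := by nlinarith
    _ = 1 := by field_simp

end Aux

/-- Every prime `p ≡ 1 (mod 8)` is G-irregular, i.e. `p` divides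
one of the Genocchi numbers `G_2, G_4, …, G_{p-3}`. -/
theorem gIrregular_of_one_mod_eight (p : ℕ) (hp : p.Prime) (h8 : p % 8 = 1) :
    ∃ k : ℕ, 1 ≤ k ∧ 2 * k ≤ p - 3 ∧ (p : ℤ) ∣ (genocchi (2 * k)).num := by
  haveI : Fact p.Prime := ⟨hp⟩
  have hp2 : 2 ≤ p := hp.two_le
  have hp9 : 9 ≤ p := by
    rcases Nat.lt_or_ge p 9 with h | h
    · interval_cases p <;> simp_all <;> omega
    · exact h
  have hpne2 : p ≠ 2 := by omega
  obtain ⟨t, ht⟩ : ∃ t, p = 8 * t + 1 := ⟨p / 8, by omega⟩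
  have ht1 : 1 ≤ t := by omega
  -- 2 is a square mod p
  have hsq : IsSquare (2 : ZMod p) :=
    (ZMod.exists_sq_eq_two_iff hpne2).mpr (Or.inl h8)
  obtain ⟨y, hy⟩ := hsq
  have hyne : y ≠ 0 := by
    intro h0
    rw [h0, mul_zero] at hy
    have : ((2 : ℕ) : ZMod p) = 0 := by exact_mod_cast hy
    have := (ZMod.natCast_eq_zero_iff 2 p).mp this
    have := Nat.le_of_dvd (by norm_num) this
    omega
  -- 4 ^ (2t) = 1 in ZMod p
  have h4 : (4 : ZMod p) ^ (2 * t) = 1 := by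
    have h2 : (4 : ZMod p) = (y * y) ^ 2 := by rw [← hy]; norm_num
    rw [h2, ← pow_mul]
    have : (y * y) ^ (2 * (2 * t)) = y ^ (8 * t) := by
      rw [mul_pow, ← pow_add]; ring_nf
    rw [this]
    have := ZMod.pow_card_sub_one_eq_one hyne
    rw [show p - 1 = 8 * t by omega] at this
    exact this
  set k := orderOf (4 : ZMod p) with hk
  have hfin : IsOfFinOrder (4 : ZMod p) :=
    isOfFinOrder_iff_pow_eq_one.mpr ⟨2 * t, by omega, h4⟩
  have hkpos : 0 < k := hfin.orderOf_pos
  have hkdvd : k ∣ 2 * t := orderOf_dvd_of_pow_eq_one h4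
  have hkle : k ≤ 2 * t := Nat.le_of_dvd (by omega) hkdvd
  have h4k : (4 : ZMod p) ^ k = 1 := pow_orderOf_eq_one _
  refine ⟨k, hkpos, by omega, ?_⟩
  -- p divides 4^k - 1 in ℤ
  have hdvdint : (p : ℤ) ∣ (1 - 4 ^ k : ℤ) := by
    have : ((1 - 4 ^ k : ℤ) : ZMod p) = 0 := by
      push_cast
      rw [h4k]
      ring
    exact_mod_cast (ZMod.intCast_zmod_eq_zero_iff_dvd _ p).mp this
  -- norm bound on genocchi
  have hpinv : (0:ℚ) < (p:ℚ)⁻¹ := by positivity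
  have hnorm : padicNorm p (genocchi (2 * k)) ≤ (p:ℚ)⁻¹ := by
    rw [genocchi, padicNorm.mul, padicNorm.mul]
    have h1 : padicNorm p 2 ≤ 1 := by
      have := padicNorm.of_nat (p := p) 2
      simpa using this
    have h2 : padicNorm p (1 - 2 ^ (2 * k) : ℚ) ≤ (p:ℚ)⁻¹ := by
      have hc : (1 - 2 ^ (2 * k) : ℚ) = ((1 - 4 ^ k : ℤ) : ℚ) := by
        push_cast
        rw [pow_mul]
        norm_num
      rw [hc]
      have hd : ((p ^ 1 : ℕ) : ℤ) ∣ (1 - 4 ^ k : ℤ) := by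
        rw [pow_one]; exact_mod_cast hdvdint
      have := (padicNorm.dvd_iff_norm_le (p := p) (n := 1)).mp hd
      simpa [zpow_neg_one] using this
    have h3 : padicNorm p (bernoulli (2 * k)) ≤ 1 := by
      apply norm_bernoulli_le_one (by omega) (by omega)
      intro hcon
      have := Nat.le_of_dvd (by omega) hcon
      omega
    have n1 := padicNorm.nonneg (p := p) (2 : ℚ)
    have n2 := padicNorm.nonneg (p := p) (1 - 2 ^ (2 * k) : ℚ)
    have n3 := padicNorm.nonneg (p := p) (bernoulli (2 * k))
    calc padicNorm p 2 * padicNorm p (1 - 2 ^ (2 * k)) * padicNorm p (bernoulli (2 * k))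
        ≤ 1 * (p:ℚ)⁻¹ * 1 := by
          apply mul_le_mul (mul_le_mul h1 h2 n2 zero_le_one) h3 n3 (by positivity)
      _ = (p:ℚ)⁻¹ := by ring
  -- conclude divisibility of the numerator
  have hnum : padicNorm p ((genocchi (2 * k)).num : ℚ) ≤ (p:ℚ)⁻¹ := by
    have hden : ((genocchi (2 * k)).den : ℚ) ≠ 0 := by
      exact_mod_cast (genocchi (2 * k)).den_nz
    have : ((genocchi (2 * k)).num : ℚ) = genocchi (2 * k) * ((genocchi (2 * k)).den : ℚ) := by
      have h := Rat.num_div_den (genocchi (2 * k))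
      rw [div_eq_iff hden] at h
      exact h
    rw [this, padicNorm.mul]
    have hd1 : padicNorm p ((genocchi (2 * k)).den : ℚ) ≤ 1 := padicNorm.of_nat _
    have n1 := padicNorm.nonneg (p := p) (genocchi (2 * k))
    have n2 := padicNorm.nonneg (p := p) ((genocchi (2 * k)).den : ℚ)
    calc padicNorm p (genocchi (2 * k)) * padicNorm p ((genocchi (2 * k)).den : ℚ)
        ≤ (p:ℚ)⁻¹ * 1 := mul_le_mul hnorm hd1 n2 hpinv.le
      _ = (p:ℚ)⁻¹ := by ring
  have := (padicNorm.dvd_iff_norm_le (p := p) (n := 1) (z := (genocchi (2 * k)).num)).mpr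
    (by simpa [zpow_neg_one] using hnum)
  simpa using this
end

section
/- If p is a Wieferich prime (an odd prime with 2^{p-1} ≡ 1 (mod p^2)), then p divides the Genocchi number G_{p-1}; conversely, if p is an odd prime that is not a Wieferich prime, then p does not divide G_{p-1}. -/
open Finset

section aux
variable {p : ℕ} [hpf : Fact p.Prime]

lemma sum_range_pow_zmod (k : ℕ) :
    (∑ a ∈ range p, ((a : ZMod p)) ^ k) = ∑ x : ZMod p, x ^ k := by
  haveI : NeZero p := ⟨hpf.out.ne_zero⟩
  refine Finset.sum_nbij' (fun a => (a : ZMod p)) (fun x => x.val) ?_ ?_ ?_ ?_ ?_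
  · intro a _; exact Finset.mem_univ _
  · intro x _; exact Finset.mem_range.2 (ZMod.val_lt x)
  · intro a ha; exact ZMod.val_natCast_of_lt (Finset.mem_range.1 ha)
  · intro x _; exact ZMod.natCast_zmod_val x
  · intro a _; rfl

lemma dvd_powsum (k : ℕ) (hk : k < p - 1) :
    (p : ℤ) ∣ (∑ a ∈ range p, (a : ℤ) ^ k) := by
  rw [← ZMod.intCast_zmod_eq_zero_iff_dvd]
  push_cast
  rw [sum_range_pow_zmod]
  exact FiniteField.sum_pow_lt_card_sub_one (ZMod p) k (by rwa [ZMod.card])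

lemma powsum_p_sub_one :
    (p : ℤ) ∣ (∑ a ∈ range p, (a : ℤ) ^ (p - 1)) + 1 := by
  haveI : NeZero p := ⟨hpf.out.ne_zero⟩
  rw [← ZMod.intCast_zmod_eq_zero_iff_dvd]
  push_cast
  rw [sum_range_pow_zmod]
  have h : ∀ x : ZMod p, x ^ (p - 1) = if x = 0 then 0 else 1 := by
    intro x
    by_cases hx : x = 0
    · simp [hx, zero_pow, Nat.sub_ne_zero_of_lt hpf.out.one_lt]
    · simp [hx, ZMod.pow_card_sub_one_eq_one hx]
  rw [Finset.sum_congr rfl fun x _ => h x]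
  rw [Finset.sum_ite, Finset.sum_const, Finset.sum_const]
  simp only [smul_zero, zero_add, smul_eq_mul, mul_one]
  rw [Finset.filter_ne', Finset.card_erase_of_mem (Finset.mem_univ _), Finset.card_univ, ZMod.card]
  have h2 : ((p - 1 : ℕ) : ZMod p) = -1 := by
    have := hpf.out.one_lt
    push_cast [Nat.cast_sub (le_of_lt this)]
    simp [ZMod.natCast_self]
  rw [nsmul_eq_mul, mul_one, h2]; ring

lemma faulhaber_padic (k : ℕ) :
    (p : ℚ_[p]) * (bernoulli k : ℚ_[p]) =
      ((∑ a ∈ range p, (a : ℤ) ^ k : ℤ) : ℚ_[p]) -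
      ∑ i ∈ range k, (bernoulli i : ℚ_[p]) * (((k + 1).choose i : ℕ) : ℚ_[p]) *
        (p : ℚ_[p]) ^ (k + 1 - i) / ((k : ℚ_[p]) + 1) := by
  have hk1 : ((k : ℚ) + 1) ≠ 0 := by positivity
  have hQ : (p : ℚ) * bernoulli k = (∑ a ∈ range p, (a : ℚ) ^ k) -
      ∑ i ∈ range k, bernoulli i * (((k + 1).choose i : ℕ) : ℚ) * (p : ℚ) ^ (k + 1 - i) / ((k : ℚ) + 1) := by
    have h := sum_range_pow p k
    rw [Finset.sum_range_succ] at h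
    have hck : (((k + 1).choose k : ℕ) : ℚ) = (k : ℚ) + 1 := by
      rw [Nat.choose_succ_self_right]; push_cast; ring
    have h1 : k + 1 - k = 1 := by omega
    rw [h1, hck, pow_one] at h
    have h2 : bernoulli k * ((k : ℚ) + 1) * (p : ℚ) / ((k : ℚ) + 1) = (p : ℚ) * bernoulli k := by
      field_simp
    rw [h2] at h
    push_cast at h ⊢
    linarith [h]
  have h3 := congrArg (fun q : ℚ => (q : ℚ_[p])) hQ
  push_cast at h3
  push_cast
  convert h3 using 2

lemma norm_term_le (k : ℕ) (hk : k ≤ p - 1)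
    (ih : ∀ i, i < k → ‖(bernoulli i : ℚ_[p])‖ ≤ 1) :
    ‖∑ i ∈ range k, (bernoulli i : ℚ_[p]) * (((k + 1).choose i : ℕ) : ℚ_[p]) *
        (p : ℚ_[p]) ^ (k + 1 - i) / ((k : ℚ_[p]) + 1)‖ ≤ (p : ℝ)⁻¹ := by
  have hp1 : (1 : ℝ) < p := by exact_mod_cast hpf.out.one_lt
  have hppos : (0 : ℝ) < p := lt_trans one_pos hp1
  apply IsUltrametricDist.norm_sum_le_of_forall_le_of_nonneg (by positivity)
  intro i hi
  rw [Finset.mem_range] at hi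
  have hb := ih i hi
  rw [norm_div, norm_mul, norm_mul, norm_pow, Padic.norm_p]
  have hC : ‖(((k + 1).choose i : ℕ) : ℚ_[p])‖ ≤ 1 := by
    rw [show ((((k + 1).choose i : ℕ)) : ℚ_[p]) = (((((k + 1).choose i : ℕ)) : ℤ) : ℚ_[p]) by
      push_cast; ring]
    exact Padic.norm_int_le_one _
  have hk1 : (p : ℝ)⁻¹ ≤ ‖((k : ℚ_[p]) + 1)‖ := by
    have heq : ((k : ℚ_[p]) + 1) = (((k : ℤ) + 1 : ℤ) : ℚ_[p]) := by push_cast; ring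
    rw [heq]
    by_contra hlt
    push_neg at hlt
    have hle : ‖(((k : ℤ) + 1 : ℤ) : ℚ_[p])‖ ≤ (p : ℝ) ^ (-(2 : ℕ) : ℤ) := by
      rw [Padic.norm_le_pow_iff_norm_lt_pow_add_one]
      have : (-(2 : ℕ) + 1 : ℤ) = -1 := by norm_num
      rw [this]
      simpa [zpow_neg, zpow_one] using hlt
    have hdvd := (Padic.norm_int_le_pow_iff_dvd ((k : ℤ) + 1) 2).1 hle
    have h1 := Int.le_of_dvd (by positivity) hdvd
    have hplt := hpf.out.two_le
    have : (p : ℤ) ^ 2 ≤ (k : ℤ) + 1 := h1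
    have hk2 : (k : ℤ) + 1 ≤ (p : ℤ) := by
      have : k ≤ p - 1 := hk
      omega
    nlinarith [show (2 : ℤ) ≤ (p : ℤ) from by exact_mod_cast hplt]
  have hpow : ((p : ℝ)⁻¹) ^ (k + 1 - i) ≤ (p : ℝ)⁻¹ * (p : ℝ)⁻¹ := by
    have h1 : 2 ≤ k + 1 - i := by omega
    calc ((p : ℝ)⁻¹) ^ (k + 1 - i) ≤ ((p : ℝ)⁻¹) ^ 2 :=
          pow_le_pow_of_le_one (by positivity) (by
            rw [inv_le_one_iff₀]; right; linarith) h1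
      _ = (p : ℝ)⁻¹ * (p : ℝ)⁻¹ := sq _
  have hnum : ‖(bernoulli i : ℚ_[p])‖ * ‖(((k + 1).choose i : ℕ) : ℚ_[p])‖ *
      ((p : ℝ)⁻¹) ^ (k + 1 - i) ≤ (p : ℝ)⁻¹ * (p : ℝ)⁻¹ := by
    calc ‖(bernoulli i : ℚ_[p])‖ * ‖(((k + 1).choose i : ℕ) : ℚ_[p])‖ * ((p : ℝ)⁻¹) ^ (k + 1 - i)
        ≤ 1 * 1 * ((p : ℝ)⁻¹ * (p : ℝ)⁻¹) := by
          apply mul_le_mul (mul_le_mul hb hC (norm_nonneg _) zero_le_one) hpow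
            (by positivity) (by norm_num)
      _ = (p : ℝ)⁻¹ * (p : ℝ)⁻¹ := by ring
  calc ‖(bernoulli i : ℚ_[p])‖ * ‖(((k + 1).choose i : ℕ) : ℚ_[p])‖ *
      ((p : ℝ)⁻¹) ^ (k + 1 - i) / ‖((k : ℚ_[p]) + 1)‖
      ≤ ((p : ℝ)⁻¹ * (p : ℝ)⁻¹) / (p : ℝ)⁻¹ :=
        div_le_div₀ (by positivity) hnum (by positivity) hk1
    _ = (p : ℝ)⁻¹ := by field_simp

lemma norm_bernoulli_le {k : ℕ} (hk : k < p - 1) : ‖(bernoulli k : ℚ_[p])‖ ≤ 1 := by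
  induction k using Nat.strong_induction_on with
  | _ k ih =>
  have hp1 : (1 : ℝ) < p := by exact_mod_cast hpf.out.one_lt
  have hppos : (0 : ℝ) < p := lt_trans one_pos hp1
  have hS : ‖((∑ a ∈ range p, (a : ℤ) ^ k : ℤ) : ℚ_[p])‖ ≤ (p : ℝ)⁻¹ := by
    have h := (Padic.norm_int_le_pow_iff_dvd (∑ a ∈ range p, (a : ℤ) ^ k) 1).2
      (by simpa using dvd_powsum k hk)
    simpa [zpow_neg, zpow_one] using h
  have hT := norm_term_le (p := p) k (le_of_lt hk) (fun i hi => ih i hi (lt_trans hi hk))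
  have hkey : ‖(p : ℚ_[p]) * (bernoulli k : ℚ_[p])‖ ≤ (p : ℝ)⁻¹ := by
    rw [faulhaber_padic k, sub_eq_add_neg]
    refine le_trans (IsUltrametricDist.norm_add_le_max _ _) (max_le hS ?_)
    rwa [norm_neg]
  rw [norm_mul, Padic.norm_p] at hkey
  have h2 : (p : ℝ)⁻¹ * ‖(bernoulli k : ℚ_[p])‖ ≤ (p : ℝ)⁻¹ * 1 := by
    rw [mul_one]; exact hkey
  exact le_of_mul_le_mul_left h2 (inv_pos.2 hppos)

lemma norm_bernoulli_p_sub_one : ‖(bernoulli (p - 1) : ℚ_[p])‖ = (p : ℝ) := by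
  have hp1 : (1 : ℝ) < p := by exact_mod_cast hpf.out.one_lt
  have hppos : (0 : ℝ) < p := lt_trans one_pos hp1
  set k : ℕ := p - 1 with hkdef
  have hT := norm_term_le (p := p) k le_rfl (fun i hi => norm_bernoulli_le hi)
  have hS : ‖((∑ a ∈ range p, (a : ℤ) ^ k : ℤ) : ℚ_[p]) + 1‖ ≤ (p : ℝ)⁻¹ := by
    have h := (Padic.norm_int_le_pow_iff_dvd ((∑ a ∈ range p, (a : ℤ) ^ k) + 1) 1).2
      (by simpa using powsum_p_sub_one (p := p))
    push_cast at h
    simpa [zpow_neg, zpow_one] using h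
  have hkey : ‖(p : ℚ_[p]) * (bernoulli k : ℚ_[p]) + 1‖ ≤ (p : ℝ)⁻¹ := by
    have heq : (p : ℚ_[p]) * (bernoulli k : ℚ_[p]) + 1 =
        (((∑ a ∈ range p, (a : ℤ) ^ k : ℤ) : ℚ_[p]) + 1) +
        -(∑ i ∈ range k, (bernoulli i : ℚ_[p]) * (((k + 1).choose i : ℕ) : ℚ_[p]) *
          (p : ℚ_[p]) ^ (k + 1 - i) / ((k : ℚ_[p]) + 1)) := by
      rw [faulhaber_padic k]; ring
    rw [heq]
    refine le_trans (IsUltrametricDist.norm_add_le_max _ _) (max_le hS ?_)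
    rwa [norm_neg]
  have hone : ‖(p : ℚ_[p]) * (bernoulli k : ℚ_[p])‖ = 1 := by
    have hup : ‖(p : ℚ_[p]) * (bernoulli k : ℚ_[p])‖ ≤ 1 := by
      have heq : (p : ℚ_[p]) * (bernoulli k : ℚ_[p]) =
          ((p : ℚ_[p]) * (bernoulli k : ℚ_[p]) + 1) + (-1) := by ring
      rw [heq]
      refine le_trans (IsUltrametricDist.norm_add_le_max _ _) (max_le ?_ ?_)
      · exact hkey.trans (by rw [inv_le_one_iff₀]; right; linarith)
      · simp
    refine le_antisymm hup (not_lt.1 fun hlt => ?_)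
    have hne : ‖(p : ℚ_[p]) * (bernoulli k : ℚ_[p])‖ ≠ ‖(1 : ℚ_[p])‖ := by
      rw [norm_one]; exact ne_of_lt hlt
    have hmax := IsUltrametricDist.norm_add_eq_max_of_norm_ne_norm hne
    rw [norm_one] at hmax
    have h1 : ‖(p : ℚ_[p]) * (bernoulli k : ℚ_[p]) + 1‖ = 1 := by
      rw [hmax]; exact max_eq_right (le_of_lt hlt)
    rw [h1] at hkey
    have hinv : (p : ℝ)⁻¹ < 1 := by rw [inv_lt_one_iff₀]; right; linarith
    linarith
  rw [norm_mul, Padic.norm_p] at hone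
  exact ((inv_mul_eq_one₀ (ne_of_gt hppos)).1 hone).symm

lemma dvd_num_iff_norm_lt_one (q : ℚ) :
    (p : ℤ) ∣ q.num ↔ ‖((q : ℚ) : ℚ_[p])‖ < 1 := by
  have hden0 : (q.den : ℚ_[p]) ≠ 0 := by
    exact_mod_cast Nat.cast_ne_zero.2 q.den_nz
  have hq : ((q : ℚ) : ℚ_[p]) = ((q.num : ℤ) : ℚ_[p]) / ((q.den : ℕ) : ℚ_[p]) := by
    rw [Rat.cast_def]
  have hdencast : ((q.den : ℕ) : ℚ_[p]) = (((q.den : ℕ) : ℤ) : ℚ_[p]) := by push_cast; ring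
  constructor
  · intro h
    have hnd : ¬ (p : ℤ) ∣ (q.den : ℤ) := by
      intro hd
      have h1 : p ∣ q.num.natAbs := by
        rwa [Int.natCast_dvd] at h
      have h2 : p ∣ q.den := by exact_mod_cast hd
      have := Nat.Coprime.eq_one_of_dvd (Nat.Coprime.coprime_dvd_left h1 q.reduced) h2
      exact hpf.out.ne_one (by omega)
    have hdnorm : ‖((q.den : ℕ) : ℚ_[p])‖ = 1 := by
      rw [hdencast]
      refine le_antisymm (Padic.norm_int_le_one _) (not_lt.1 fun hlt => ?_)
      exact hnd (Padic.norm_intCast_lt_one_iff.1 hlt)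
    rw [hq, norm_div, hdnorm, div_one]
    exact Padic.norm_intCast_lt_one_iff.2 h
  · intro h
    by_contra hnum
    have hnnorm : ‖((q.num : ℤ) : ℚ_[p])‖ = 1 := by
      refine le_antisymm (Padic.norm_int_le_one _) (not_lt.1 fun hlt => ?_)
      exact hnum (Padic.norm_intCast_lt_one_iff.1 hlt)
    have hdle : ‖((q.den : ℕ) : ℚ_[p])‖ ≤ 1 := by
      rw [hdencast]; exact Padic.norm_int_le_one _
    have hdpos : 0 < ‖((q.den : ℕ) : ℚ_[p])‖ := norm_pos_iff.2 hden0
    rw [hq, norm_div, hnnorm] at h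
    have : (1 : ℝ) ≤ 1 / ‖((q.den : ℕ) : ℚ_[p])‖ := (one_le_div hdpos).2 hdle
    linarith

end aux

/-- An odd prime `p` divides the Genocchi number `G_{p-1}` if and only if
`p` is a Wieferich prime, i.e. `2^{p-1} ≡ 1 (mod p²)`. -/
theorem wieferich_iff_dvd_genocchi (p : ℕ) (hp : p.Prime) (hodd : Odd p) :
    ((2 ^ (p - 1) ≡ 1 [MOD p ^ 2]) → (p : ℤ) ∣ (genocchi (p - 1)).num) ∧
    (¬ (2 ^ (p - 1) ≡ 1 [MOD p ^ 2]) → ¬ (p : ℤ) ∣ (genocchi (p - 1)).num) := by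
  haveI : Fact p.Prime := ⟨hp⟩
  have hp2 : p ≠ 2 := by rintro rfl; exact absurd hodd (by decide)
  have hp3 : 3 ≤ p := by have := hp.two_le; omega
  have hp1 : (1 : ℝ) < p := by exact_mod_cast hp.one_lt
  have hppos : (0 : ℝ) < p := lt_trans one_pos hp1
  -- Wieferich condition as integer divisibility
  have hwief : (2 ^ (p - 1) ≡ 1 [MOD p ^ 2]) ↔ ((p : ℤ) ^ 2 ∣ (1 - 2 ^ (p - 1) : ℤ)) := by
    rw [Nat.modEq_iff_dvd]
    constructor <;> intro h <;> [skip; skip] <;>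
    · have := h
      push_cast at this ⊢
      convert this using 1 <;> push_cast <;> ring
  -- Fermat: p ∣ u
  have h2ne : (2 : ZMod p) ≠ 0 := by
    intro h
    have : (p : ℕ) ∣ 2 := by
      have := (ZMod.natCast_eq_zero_iff 2 p).1 (by exact_mod_cast h)
      exact this
    have hle := Nat.le_of_dvd (by norm_num) this
    omega
  have hfermat : (p : ℤ) ∣ (1 - 2 ^ (p - 1) : ℤ) := by
    rw [← ZMod.intCast_zmod_eq_zero_iff_dvd]
    push_cast
    rw [ZMod.pow_card_sub_one_eq_one h2ne]
    ring
  -- norm of 2 in ℚ_[p]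
  have h2norm : ‖(2 : ℚ_[p])‖ = 1 := by
    have heq : (2 : ℚ_[p]) = ((2 : ℤ) : ℚ_[p]) := by push_cast; ring
    rw [heq]
    refine le_antisymm (Padic.norm_int_le_one _) (not_lt.1 fun hlt => ?_)
    have := Padic.norm_intCast_lt_one_iff.1 hlt
    have := Int.le_of_dvd (by norm_num) this
    omega
  -- norm of genocchi
  have hgcast : ((genocchi (p - 1) : ℚ) : ℚ_[p]) =
      (2 : ℚ_[p]) * ((1 - 2 ^ (p - 1) : ℤ) : ℚ_[p]) * (bernoulli (p - 1) : ℚ_[p]) := by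
    unfold genocchi
    push_cast
    ring
  have hgnorm : ‖((genocchi (p - 1) : ℚ) : ℚ_[p])‖ = ‖((1 - 2 ^ (p - 1) : ℤ) : ℚ_[p])‖ * p := by
    rw [hgcast, norm_mul, norm_mul, h2norm, one_mul, norm_bernoulli_p_sub_one]
  constructor
  · intro hw
    rw [dvd_num_iff_norm_lt_one, hgnorm]
    have hle : ‖((1 - 2 ^ (p - 1) : ℤ) : ℚ_[p])‖ ≤ (p : ℝ) ^ (-(2 : ℕ) : ℤ) :=
      (Padic.norm_int_le_pow_iff_dvd (1 - 2 ^ (p - 1) : ℤ) 2).2 (by exact_mod_cast (hwief.1 hw))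
    have : ‖((1 - 2 ^ (p - 1) : ℤ) : ℚ_[p])‖ * p ≤ (p : ℝ) ^ (-(2 : ℕ) : ℤ) * p := by
      exact mul_le_mul_of_nonneg_right hle (le_of_lt hppos)
    refine lt_of_le_of_lt this ?_
    rw [show (-(2 : ℕ) : ℤ) = -2 by norm_num, zpow_neg]
    rw [show ((p : ℝ) ^ (2 : ℤ))⁻¹ * p = (p : ℝ)⁻¹ by
      rw [zpow_two]; field_simp]
    rw [inv_lt_one_iff₀]; right; linarith
  · intro hw
    rw [dvd_num_iff_norm_lt_one, hgnorm]
    have hnle : ¬ ‖((1 - 2 ^ (p - 1) : ℤ) : ℚ_[p])‖ ≤ (p : ℝ) ^ (-(2 : ℕ) : ℤ) := by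
      intro hle
      exact hw (hwief.2 (by exact_mod_cast (Padic.norm_int_le_pow_iff_dvd (1 - 2 ^ (p - 1) : ℤ) 2).1 hle))
    rw [Padic.norm_le_pow_iff_norm_lt_pow_add_one] at hnle
    push_neg at hnle
    have h1 : ((-(2 : ℕ) : ℤ) + 1) = -1 := by norm_num
    rw [h1] at hnle
    have hge : (p : ℝ)⁻¹ ≤ ‖((1 - 2 ^ (p - 1) : ℤ) : ℚ_[p])‖ := by
      simpa [zpow_neg, zpow_one] using hnle
    intro hlt
    have : (1 : ℝ) ≤ ‖((1 - 2 ^ (p - 1) : ℤ) : ℚ_[p])‖ * p := by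
      have := mul_le_mul_of_nonneg_right hge (le_of_lt hppos)
      rw [inv_mul_cancel₀ (ne_of_gt hppos)] at this
      exact this
    linarith
end

section
/- The sum Σ_{n odd squarefree} μ(n)/(n·φ(n)) over odd squarefree positive integers n equals 2A, where A = Π_p (1 - 1/(p(p-1))) is the Artin constant, and consequently Σ_{n≥1} μ(n)/(φ(2n)·n) = (3/2)·A. -/
open ArithmeticFunction


lemma le_totient_sq_of_odd {n : ℕ} (hn : Odd n) : n ≤ n.totient ^ 2 := by
  have h0 : n ≠ 0 := by rintro rfl; simp at hn
  rw [Nat.totient_eq_prod_factorization h0]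
  conv_lhs => rw [← Nat.factorization_prod_pow_eq_self h0]
  rw [Finsupp.prod, Finsupp.prod, ← Finset.prod_pow]
  refine Finset.prod_le_prod' fun p hp => ?_
  have hpp : p.Prime := Nat.prime_of_mem_primeFactors (by rwa [Nat.support_factorization] at hp)
  have hpd : p ∣ n := Nat.dvd_of_mem_primeFactors (by rwa [Nat.support_factorization] at hp)
  have hpo : p ≠ 2 := by
    rintro rfl
    exact (Nat.not_even_iff_odd.mpr hn) (even_iff_two_dvd.mpr hpd)
  have hp3 : 3 ≤ p := by
    rcases hpp.two_le.lt_or_eq with h | h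
    · omega
    · omega
  obtain ⟨m, hm⟩ : ∃ m, n.factorization p = m + 1 :=
    ⟨n.factorization p - 1, by
      have h1 : n.factorization p ≠ 0 := Finsupp.mem_support_iff.mp hp
      omega⟩
  rw [hm]
  have key : p ≤ (p - 1) ^ 2 := by nlinarith [Nat.sub_add_cancel (by omega : 1 ≤ p)]
  calc p ^ (m + 1) = p ^ m * p := by ring
    _ ≤ p ^ (2 * m) * (p - 1) ^ 2 := by
        refine Nat.mul_le_mul (Nat.pow_le_pow_right hpp.pos ?_) key
        omega
    _ = (p ^ (m + 1 - 1) * (p - 1)) ^ 2 := by simp [mul_pow, ← pow_mul, mul_comm]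



lemma le_two_mul_totient_sq {n : ℕ} (h0 : n ≠ 0) : n ≤ 2 * n.totient ^ 2 := by
  set k := n.factorization 2 with hk
  set m := ordCompl[2] n with hm
  have hsplit : 2 ^ k * m = n := Nat.ordProj_mul_ordCompl_eq_self n 2
  have hcop : Nat.Coprime (2 ^ k) m :=
    Nat.Coprime.pow_left _ (Nat.coprime_ordCompl Nat.prime_two h0)
  have hmodd : Odd m := Nat.odd_iff.mpr (Nat.two_dvd_ne_zero.mp (Nat.not_dvd_ordCompl Nat.prime_two h0))
  have htot : n.totient = (2 ^ k).totient * m.totient := by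
    rw [← hsplit]; exact Nat.totient_mul hcop
  have h2k : 2 ^ k ≤ 2 * (2 ^ k).totient ^ 2 := by
    cases k with
    | zero => simp
    | succ j =>
      rw [Nat.totient_prime_pow_succ Nat.prime_two]
      have : 2 ^ (j + 1) ≤ 2 ^ (2 * j + 1) := Nat.pow_le_pow_right (by norm_num) (by omega)
      calc 2 ^ (j + 1) ≤ 2 ^ (2 * j + 1) := this
        _ = 2 * (2 ^ j * (2 - 1)) ^ 2 := by ring
  calc n = 2 ^ k * m := hsplit.symm
    _ ≤ (2 * (2 ^ k).totient ^ 2) * m.totient ^ 2 :=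
        Nat.mul_le_mul h2k (le_totient_sq_of_odd hmodd)
    _ = 2 * ((2 ^ k).totient * m.totient) ^ 2 := by ring
    _ = 2 * n.totient ^ 2 := by rw [htot]

lemma summable_inv_mul_totient : Summable (fun n : ℕ => ((n : ℝ) * n.totient)⁻¹) := by
  have hs : Summable (fun n : ℕ => Real.sqrt 2 * ((n : ℝ) ^ ((3:ℝ)/2))⁻¹) :=
    (Real.summable_nat_rpow_inv.mpr (by norm_num)).mul_left _
  refine Summable.of_nonneg_of_le (fun n => by positivity) (fun n => ?_) hs
  rcases Nat.eq_zero_or_pos n with rfl | hn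
  · simp
  have hb : (n : ℝ) ≤ 2 * (n.totient : ℝ) ^ 2 := by
    exact_mod_cast le_two_mul_totient_sq hn.ne'
  have htpos : (0:ℝ) < n.totient := by exact_mod_cast Nat.totient_pos.mpr hn
  have hnpos : (0:ℝ) < n := by exact_mod_cast hn
  have key : (n : ℝ) ^ ((3:ℝ)/2) ≤ Real.sqrt 2 * ((n : ℝ) * n.totient) := by
    have h1 : (n : ℝ) ^ ((3:ℝ)/2) = Real.sqrt ((n:ℝ) ^ 3) := by
      rw [show ((3:ℝ)/2) = (3:ℝ) * (1/2) by norm_num, Real.rpow_mul hnpos.le,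
        ← Real.sqrt_eq_rpow]
      congr 1
      rw [← Real.rpow_natCast (n:ℝ) 3]; norm_num
    have h2 : Real.sqrt 2 * ((n : ℝ) * n.totient) =
        Real.sqrt (2 * ((n:ℝ) * n.totient) ^ 2) := by
      rw [Real.sqrt_mul (by norm_num), Real.sqrt_sq (by positivity)]
    rw [h1, h2]
    apply Real.sqrt_le_sqrt
    calc (n:ℝ) ^ 3 = (n:ℝ)^2 * n := by ring
      _ ≤ (n:ℝ)^2 * (2 * (n.totient:ℝ)^2) := by nlinarith
      _ = 2 * ((n:ℝ) * n.totient)^2 := by ring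
  have hP : (0:ℝ) < (n:ℝ) ^ ((3:ℝ)/2) := by positivity
  calc ((n:ℝ) * n.totient)⁻¹ = Real.sqrt 2 / (Real.sqrt 2 * ((n:ℝ)*n.totient)) := by
        rw [div_mul_eq_div_div, div_self (by positivity), one_div]
    _ ≤ Real.sqrt 2 / ((n:ℝ) ^ ((3:ℝ)/2)) := by gcongr
    _ = Real.sqrt 2 * ((n:ℝ) ^ ((3:ℝ)/2))⁻¹ := by rw [div_eq_mul_inv]



noncomputable def f1 (n : ℕ) : ℝ := if Odd n then (moebius n : ℝ) / (n * n.totient) else 0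
noncomputable def f2 (n : ℕ) : ℝ :=
  if 1 ≤ n then (moebius n : ℝ) / ((Nat.totient (2 * n) : ℝ) * n) else 0

lemma f1_one : f1 1 = 1 := by simp [f1]
lemma f1_zero : f1 0 = 0 := by simp [f1]
lemma f2_one : f2 1 = 1 := by simp [f2]
lemma f2_zero : f2 0 = 0 := by simp [f2]

lemma f1_mul {m n : ℕ} (h : Nat.Coprime m n) : f1 (m * n) = f1 m * f1 n := by
  unfold f1
  by_cases hm : Odd m
  · by_cases hn : Odd n
    · rw [if_pos (Nat.odd_mul.mpr ⟨hm, hn⟩), if_pos hm, if_pos hn,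
        isMultiplicative_moebius.map_mul_of_coprime h, Nat.totient_mul h,
        div_mul_div_comm]
      push_cast
      ring_nf
    · rw [if_neg (fun hc => hn (Nat.odd_mul.mp hc).2), if_neg hn, mul_zero]
  · rw [if_neg (fun hc => hm (Nat.odd_mul.mp hc).1), if_neg hm, zero_mul]

lemma totient_two_mul_mul {m n : ℕ} (h : Nat.Coprime m n) :
    Nat.totient (2 * (m * n)) = Nat.totient (2 * m) * Nat.totient (2 * n) := by
  rcases Nat.even_or_odd m with hme | hmo
  · have hno : Odd n := by
      rcases Nat.even_or_odd n with hne | hno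
      · exfalso
        have h2m : 2 ∣ m := hme.two_dvd
        have h2n : 2 ∣ n := hne.two_dvd
        have h21 : (2:ℕ) ∣ 1 := h ▸ Nat.dvd_gcd h2m h2n
        norm_num at h21
      · exact hno
    have hc1 : Nat.Coprime (2 * m) n := hno.coprime_two_left.mul h
    rw [show 2 * (m * n) = (2 * m) * n by ring, Nat.totient_mul hc1,
      Nat.totient_mul hno.coprime_two_left, Nat.totient_two, one_mul]
  · rcases Nat.even_or_odd n with hne | hno
    · have hc1 : Nat.Coprime m (2 * n) := (hmo.coprime_two_left.symm).mul_right h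
      rw [show 2 * (m * n) = m * (2 * n) by ring, Nat.totient_mul hc1,
        Nat.totient_mul hmo.coprime_two_left, Nat.totient_two, one_mul]
    · have hmn : Odd (m * n) := Nat.odd_mul.mpr ⟨hmo, hno⟩
      rw [Nat.totient_mul hmn.coprime_two_left, Nat.totient_mul hmo.coprime_two_left,
        Nat.totient_mul hno.coprime_two_left, Nat.totient_mul h, Nat.totient_two]
      ring

lemma f2_mul {m n : ℕ} (h : Nat.Coprime m n) : f2 (m * n) = f2 m * f2 n := by
  rcases Nat.eq_zero_or_pos m with rfl | hm
  · simp [f2]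
  rcases Nat.eq_zero_or_pos n with rfl | hn
  · simp [f2]
  unfold f2
  rw [if_pos (show 1 ≤ m * n from Nat.one_le_iff_ne_zero.mpr (Nat.mul_ne_zero hm.ne' hn.ne')),
    if_pos (show 1 ≤ m from hm), if_pos (show 1 ≤ n from hn),
    isMultiplicative_moebius.map_mul_of_coprime h, totient_two_mul_mul h, div_mul_div_comm]
  push_cast
  ring_nf

lemma f1_norm_le (n : ℕ) : ‖f1 n‖ ≤ ((n : ℝ) * n.totient)⁻¹ := by
  unfold f1
  by_cases hn : Odd n
  · have hnp : (0:ℝ) < n := by exact_mod_cast hn.pos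
    have htp : (0:ℝ) < n.totient := by exact_mod_cast Nat.totient_pos.mpr hn.pos
    have habs : |(moebius n : ℝ)| ≤ 1 := by exact_mod_cast (abs_moebius_le_one (n := n))
    rw [if_pos hn, Real.norm_eq_abs, abs_div,
      abs_of_pos (show (0:ℝ) < (n:ℝ) * n.totient from by positivity), ← one_div]
    gcongr
  · rw [if_neg hn]; simp only [norm_zero]; positivity

lemma f2_norm_le (n : ℕ) : ‖f2 n‖ ≤ ((n : ℝ) * n.totient)⁻¹ := by
  unfold f2
  by_cases hn : 1 ≤ n
  · have hnp : (0:ℝ) < n := by exact_mod_cast hn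
    have htp : 0 < n.totient := Nat.totient_pos.mpr hn
    have htle : (n.totient : ℝ) ≤ (Nat.totient (2 * n) : ℝ) := by
      exact_mod_cast Nat.le_of_dvd (Nat.totient_pos.mpr (by omega))
        (Nat.totient_dvd_of_dvd ⟨2, by ring⟩)
    have htp' : (0:ℝ) < Nat.totient (2 * n) := lt_of_lt_of_le (by exact_mod_cast htp) htle
    have htpr : (0:ℝ) < n.totient := by exact_mod_cast htp
    have habs : |(moebius n : ℝ)| ≤ 1 := by exact_mod_cast (abs_moebius_le_one (n := n))
    rw [if_pos hn, Real.norm_eq_abs, abs_div,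
      abs_of_pos (show (0:ℝ) < (Nat.totient (2*n) : ℝ) * n from mul_pos htp' hnp)]
    calc |(moebius n : ℝ)| / ((Nat.totient (2*n) : ℝ) * n)
        ≤ 1 / ((n.totient : ℝ) * n) := by gcongr
      _ = ((n : ℝ) * n.totient)⁻¹ := by rw [one_div, mul_comm]
  · rw [if_neg hn]; simp only [norm_zero]; positivity

lemma f1_summable : Summable (fun n => ‖f1 n‖) :=
  Summable.of_nonneg_of_le (fun _ => norm_nonneg _) f1_norm_le summable_inv_mul_totient

lemma f2_summable : Summable (fun n => ‖f2 n‖) :=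
  Summable.of_nonneg_of_le (fun _ => norm_nonneg _) f2_norm_le summable_inv_mul_totient

lemma tsum_factor {f : ℕ → ℝ} (h1 : f 1 = 1) {p : ℕ}
    (h0 : ∀ e, 2 ≤ e → f (p ^ e) = 0) : ∑' e : ℕ, f (p ^ e) = 1 + f p := by
  rw [tsum_eq_sum (s := ({0, 1} : Finset ℕ)) (fun e he => by
    simp only [Finset.mem_insert, Finset.mem_singleton] at he
    exact h0 e (by omega))]
  rw [Finset.sum_pair (by norm_num)]
  simp [h1]

lemma f1_pow_zero {p : ℕ} (e : ℕ) (he : 2 ≤ e) (hp : p.Prime) : f1 (p ^ e) = 0 := by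
  have : ¬ Squarefree (p ^ e) := by
    rw [Nat.squarefree_pow_iff hp.ne_one (by omega)]
    rintro ⟨-, rfl⟩; omega
  simp [f1, moebius_eq_zero_of_not_squarefree this]

lemma f2_pow_zero {p : ℕ} (e : ℕ) (he : 2 ≤ e) (hp : p.Prime) : f2 (p ^ e) = 0 := by
  have : ¬ Squarefree (p ^ e) := by
    rw [Nat.squarefree_pow_iff hp.ne_one (by omega)]
    rintro ⟨-, rfl⟩; omega
  simp [f2, moebius_eq_zero_of_not_squarefree this]



lemma f1_def (n : ℕ) : f1 n = if Odd n then (moebius n : ℝ) / (n * n.totient) else 0 := rfl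
lemma f2_def (n : ℕ) :
    f2 n = if 1 ≤ n then (moebius n : ℝ) / ((Nat.totient (2 * n) : ℝ) * n) else 0 := rfl

noncomputable def A (p : Nat.Primes) : ℝ :=
  1 - 1 / (((p : ℕ) : ℝ) * (((p : ℕ) : ℝ) - 1))

lemma f1_factor (p : Nat.Primes) :
    (∑' e : ℕ, f1 ((p : ℕ) ^ e)) = (if (p : ℕ) = 2 then 2 else 1) * A p := by
  rw [tsum_factor f1_one (fun e he => f1_pow_zero e he p.2)]
  by_cases h2 : (p : ℕ) = 2
  · rw [if_pos h2, f1_def, h2]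
    norm_num [A, h2]
  · have hp : Nat.Prime (p : ℕ) := p.2
    have hodd : Odd (p : ℕ) := hp.odd_of_ne_two h2
    have h1 : (1 : ℕ) ≤ p := hp.one_lt.le
    rw [if_neg h2, f1_def, if_pos hodd, moebius_apply_prime hp, Nat.totient_prime hp, one_mul, A]
    have : ((p - 1 : ℕ) : ℝ) = ((p : ℕ) : ℝ) - 1 := by
      push_cast [Nat.cast_sub h1]; ring
    rw [this]
    push_cast
    ring

lemma f2_factor (p : Nat.Primes) :
    (∑' e : ℕ, f2 ((p : ℕ) ^ e)) = (if (p : ℕ) = 2 then (3:ℝ)/2 else 1) * A p := by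
  rw [tsum_factor f2_one (fun e he => f2_pow_zero e he p.2)]
  by_cases h2 : (p : ℕ) = 2
  · rw [if_pos h2, f2_def, h2]
    have h4 : Nat.totient 4 = 2 := by decide
    norm_num [A, h2, moebius_apply_prime Nat.prime_two, h4]
  · have hp : Nat.Prime (p : ℕ) := p.2
    have hodd : Odd (p : ℕ) := hp.odd_of_ne_two h2
    have h1 : (1 : ℕ) ≤ p := hp.one_lt.le
    have htot : Nat.totient (2 * (p : ℕ)) = (p : ℕ) - 1 := by
      rw [Nat.totient_mul hodd.coprime_two_left, Nat.totient_two, one_mul,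
        Nat.totient_prime hp]
    rw [if_neg h2, f2_def, if_pos h1, moebius_apply_prime hp, htot, one_mul, A]
    have : ((p - 1 : ℕ) : ℝ) = ((p : ℕ) : ℝ) - 1 := by
      push_cast [Nat.cast_sub h1]; ring
    rw [this]
    push_cast
    ring

noncomputable def two_prime : Nat.Primes := ⟨2, Nat.prime_two⟩

lemma hasProd_ite (c : ℝ) :
    HasProd (fun p : Nat.Primes => if (p : ℕ) = 2 then c else 1) c := by
  have := hasProd_single (f := fun p : Nat.Primes => if (p : ℕ) = 2 then c else 1) two_prime
    (fun p hp => by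
      show (if (p : ℕ) = 2 then c else 1) = 1
      exact if_neg (fun h => hp (Subtype.ext h)))
  simpa [two_prime] using this

/-- `Σ_{n odd squarefree} μ(n)/(n φ(n)) = 2A` and
`Σ_{n ≥ 1} μ(n)/(φ(2n) n) = (3/2) A`, where `A = Π_p (1 - 1/(p(p-1)))` is the
Artin constant. -/
theorem sum_moebius_div_eq_artin :
    (∑' n : ℕ, if Odd n ∧ Squarefree n then
        (moebius n : ℝ) / (n * (Nat.totient n : ℝ)) else 0)
      = 2 * ∏' p : Nat.Primes, (1 - 1 / (((p : ℕ) : ℝ) * (((p : ℕ) : ℝ) - 1))) ∧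
    (∑' n : ℕ, if 1 ≤ n then
        (moebius n : ℝ) / ((Nat.totient (2 * n) : ℝ) * n) else 0)
      = (3 / 2) * ∏' p : Nat.Primes, (1 - 1 / (((p : ℕ) : ℝ) * (((p : ℕ) : ℝ) - 1))) := by
  have hP1 : HasProd (fun p : Nat.Primes => ∑' e : ℕ, f1 ((p : ℕ) ^ e)) (∑' n, f1 n) :=
    EulerProduct.eulerProduct_hasProd f1_one f1_mul f1_summable f1_zero
  have hP2 : HasProd (fun p : Nat.Primes => ∑' e : ℕ, f2 ((p : ℕ) ^ e)) (∑' n, f2 n) :=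
    EulerProduct.eulerProduct_hasProd f2_one f2_mul f2_summable f2_zero
  rw [funext f1_factor] at hP1
  rw [funext f2_factor] at hP2
  have hhalf : HasProd (fun p : Nat.Primes => if (p : ℕ) = 2 then (2:ℝ)⁻¹ else 1) (2:ℝ)⁻¹ :=
    hasProd_ite _
  have hA : HasProd A ((∑' n, f1 n) * (2:ℝ)⁻¹) := by
    have := hP1.mul hhalf
    have heq : (fun p : Nat.Primes =>
        ((if (p : ℕ) = 2 then (2:ℝ) else 1) * A p) * (if (p : ℕ) = 2 then (2:ℝ)⁻¹ else 1)) = A := by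
      funext p
      by_cases h2 : (p : ℕ) = 2
      · rw [if_pos h2, if_pos h2]; ring
      · rw [if_neg h2, if_neg h2]; ring
    rwa [heq] at this
  have hT : (∏' p : Nat.Primes, A p) = (∑' n, f1 n) * (2:ℝ)⁻¹ := hA.tprod_eq
  have hS2 : (∑' n, f2 n) = (3/2 : ℝ) * ((∑' n, f1 n) * (2:ℝ)⁻¹) := by
    have h32 : HasProd (fun p : Nat.Primes => if (p : ℕ) = 2 then (3:ℝ)/2 else 1) ((3:ℝ)/2) :=
      hasProd_ite _
    have := h32.mul hA
    have heq : (fun p : Nat.Primes =>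
        (if (p : ℕ) = 2 then (3:ℝ)/2 else 1) * A p)
          = fun p : Nat.Primes => ((if (p : ℕ) = 2 then (3:ℝ)/2 else 1) * A p) := rfl
    exact hP2.unique this
  have hS1 : (∑' n : ℕ, if Odd n ∧ Squarefree n then
      (moebius n : ℝ) / (n * (Nat.totient n : ℝ)) else 0) = ∑' n, f1 n := by
    refine tsum_congr fun n => ?_
    rw [f1_def]
    by_cases hsf : Squarefree n
    · by_cases ho : Odd n
      · rw [if_pos ⟨ho, hsf⟩, if_pos ho]
      · rw [if_neg (fun h => ho h.1), if_neg ho]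
    · rw [if_neg (fun h => hsf h.2), moebius_eq_zero_of_not_squarefree hsf]
      simp
  have hS2' : (∑' n : ℕ, if 1 ≤ n then
      (moebius n : ℝ) / ((Nat.totient (2 * n) : ℝ) * n) else 0) = ∑' n, f2 n :=
    tsum_congr fun n => (f2_def n).symm
  constructor
  · rw [hS1, show (∏' p : Nat.Primes, (1 - 1 / (((p : ℕ) : ℝ) * (((p : ℕ) : ℝ) - 1))))
      = ∏' p, A p from rfl, hT]
    ring
  · rw [hS2', hS2, show (∏' p : Nat.Primes, (1 - 1 / (((p : ℕ) : ℝ) * (((p : ℕ) : ℝ) - 1))))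
      = ∏' p, A p from rfl, hT]
end
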